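/- arXiv:2409.06252 — 10 statements merged into one kernel-verified Lean document; each statement's English description precedes it below -/
import Mathlib

section
/- For integers 1 ≤ i < j ≤ r, n ≥ r, and k < l, the monomial x_k x_l lies in the set Inc_{r,n}(x_i x_j) (the image of x_i x_j under strictly increasing maps π: ℕ → ℕ with π(r) ≤ n) if and only if 0 ≤ k - i ≤ l - j ≤ n - r. -/
open MvPolynomial

/-! A strictly increasing `π : ℕ → ℕ` satisfies `π b ≥ π a + (b - a)` for `a ≤ b`; applied along
`0 ≤ i < j ≤ r` this gives the three inequalities for `k = π i`, `l = π j`. Conversely they are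
realised by the map shifting `[0, i]` by `k - i` and `(i, ∞)` by `l - j`. -/

theorem MvPolynomial.X_mul_X_eq_X_mul_X_of_lt {σ R : Type*} [LinearOrder σ] [CommSemiring R]
    [Nontrivial R] {a b c d : σ} (hab : a < b) (hcd : c < d)
    (h : (X a * X b : MvPolynomial σ R) = X c * X d) : a = c ∧ b = d := by
  simp only [X, monomial_mul, mul_one, monomial_left_inj (one_ne_zero' R),
    Finsupp.single_add_single_eq_single_add_single one_ne_zero one_ne_zero] at h
  rcases h with h | ⟨-, rfl, rfl⟩ | ⟨-, rfl, -⟩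
  · exact h
  · exact absurd (hab.trans hcd) (lt_irrefl _)
  · exact absurd hab (lt_irrefl _)

theorem StrictMono.add_sub_le_nat {f : ℕ → ℕ} (hf : StrictMono f) {a b : ℕ} (hab : a ≤ b) :
    f a + (b - a) ≤ f b := by
  simpa [add_comm, Nat.add_sub_cancel' hab] using hf.add_le_nat (b - a) a

theorem strictMono_ite_le_add {i s t : ℕ} (hst : s ≤ t) :
    StrictMono fun m => if m ≤ i then m + s else m + t := by
  intro a b hab
  dsimp only
  split_ifs <;> omega

theorem mem_inc_orbit_iff_general (K : Type) [Field K] (r n i j k l : ℕ)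
    (hij : i < j) (hjr : j ≤ r) (hkl : k < l) :
    (X k * X l ∈
      {f : MvPolynomial ℕ K | ∃ π : ℕ → ℕ, StrictMono π ∧ π r ≤ n ∧
        f = X (π i) * X (π j)}) ↔
      (i ≤ k ∧ k + j ≤ l + i ∧ l + r ≤ n + j) := by
  constructor
  · rintro ⟨π, hπ, hπr, h⟩
    obtain ⟨rfl, rfl⟩ := X_mul_X_eq_X_mul_X_of_lt hkl (hπ hij) h
    have hπ0i := hπ.add_sub_le_nat i.zero_le
    have hπij := hπ.add_sub_le_nat hij.le
    have hπjr := hπ.add_sub_le_nat hjr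
    omega
  · rintro ⟨hik, hkj, hlr⟩
    refine ⟨_, strictMono_ite_le_add (i := i) (s := k - i) (t := l - j) (by omega), ?_, ?_⟩
    · simp only [if_neg (show ¬r ≤ i by omega)]
      omega
    · simp only [le_refl, if_true, if_neg (show ¬j ≤ i by omega)]
      congr 2 <;> omega

/-- For `1 ≤ i < j ≤ r ≤ n` and `k < l`, the monomial `x_k x_l` lies in
`Inc_{r,n}(x_i x_j) = {x_{π(i)} x_{π(j)} : π strictly increasing, π(r) ≤ n}` if and only
if `0 ≤ k - i ≤ l - j ≤ n - r` (the inequalities written additively over `ℕ`). -/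
theorem mem_inc_orbit_iff (K : Type) [Field K] (r n i j k l : ℕ)
    (hi : 1 ≤ i) (hij : i < j) (hjr : j ≤ r) (hrn : r ≤ n) (hkl : k < l) :
    (X k * X l ∈
      {f : MvPolynomial ℕ K | ∃ π : ℕ → ℕ, StrictMono π ∧ π r ≤ n ∧
        f = X (π i) * X (π j)}) ↔
      (i ≤ k ∧ k + j ≤ l + i ∧ l + r ≤ n + j) :=
  mem_inc_orbit_iff_general K r n i j k l hij hjr hkl
end

section
/- Let G be a graph on vertex set {1,...,n} with edge ideal I = I(G) ⊆ S = k[x_1,...,x_n], and let a ∈ ℤ^n. Then the facets of the degree complex Δ_a(I) are exactly the sets F \ G_a where F ranges over facets of the independence complex IN(G) satisfying Supp(a) ⊆ F. In particular: (i) Δ_0(I) = IN(G); (ii) if Supp(a) ∉ IN(G) then Δ_a(I) = ∅; (iii) Δ_a(I) = {∅} if and only if Supp(a) = G_a is a facet of IN(G). -/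
/-- `G_a = {i : a_i < 0}`. -/
def negSupp (n : ℕ) (a : Fin n → ℤ) : Finset (Fin n) :=
  Finset.univ.filter (fun i => a i < 0)

/-- `Supp(a) = {i : a_i ≠ 0}`. -/
def suppOf (n : ℕ) (a : Fin n → ℤ) : Finset (Fin n) :=
  Finset.univ.filter (fun i => a i ≠ 0)

/-- The localization `S_(F) = S[x_i⁻¹ : i ∈ F]` of `S = k[x_1,…,x_n]`. -/
abbrev locAway (k : Type) [Field k] (n : ℕ) (F : Finset (Fin n)) :=
  Localization (Submonoid.closure
    {f : MvPolynomial (Fin n) k | ∃ i ∈ F, f = MvPolynomial.X i})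

/-- The degree complex `Δ_a(I) = {F \ G_a : G_a ⊆ F ⊆ [n], x^a ∉ I·S_(F)}` of a
monomial ideal `I` with respect to `a ∈ ℤⁿ` (since the variables in `G_a` are
invertible in `S_(F)`, membership of `x^a` is equivalent to that of `x^{a₊}`). -/
noncomputable def degComplex (k : Type) [Field k] (n : ℕ)
    (I : Ideal (MvPolynomial (Fin n) k)) (a : Fin n → ℤ) : Set (Finset (Fin n)) :=
  {t | ∃ F : Finset (Fin n), negSupp n a ⊆ F ∧
    (algebraMap (MvPolynomial (Fin n) k) (locAway k n F)
        (∏ i, MvPolynomial.X i ^ (a i).toNat) ∉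
      Ideal.map (algebraMap (MvPolynomial (Fin n) k) (locAway k n F)) I) ∧
    t = F \ negSupp n a}

/-- The independence complex of a graph `G`. -/
def indepComplex {V : Type*} (G : SimpleGraph V) : Set (Finset V) :=
  {s | ∀ u ∈ s, ∀ v ∈ s, ¬ G.Adj u v}

/-- The edge ideal `I(G) = ⟨x_i x_j : {i,j} ∈ E(G)⟩`. -/
noncomputable def edgeIdeal (k : Type) [Field k] (n : ℕ) (G : SimpleGraph (Fin n)) :
    Ideal (MvPolynomial (Fin n) k) :=
  Ideal.span {f | ∃ i j, G.Adj i j ∧ f = MvPolynomial.X i * MvPolynomial.X j}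

/-- `s` is a facet of the complex `Δ`. -/
def isFacet {V : Type*} (Δ : Set (Finset V)) (s : Finset V) : Prop :=
  s ∈ Δ ∧ ∀ t ∈ Δ, s ⊆ t → s = t

open MvPolynomial

-- hard direction: no edge inside F ∪ supp(b) ⇒ not in mapped ideal
lemma aux_not_mem (k : Type) [Field k] (n : ℕ) (G : SimpleGraph (Fin n))
    (F : Finset (Fin n)) (b : Fin n → ℕ)
    (h : ∀ i j, G.Adj i j → ¬((i ∈ F ∨ b i ≠ 0) ∧ (j ∈ F ∨ b j ≠ 0))) :
    algebraMap (MvPolynomial (Fin n) k) (locAway k n F) (∏ i, X i ^ b i) ∉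
      Ideal.map (algebraMap (MvPolynomial (Fin n) k) (locAway k n F)) (edgeIdeal k n G) := by
  classical
  set M : Submonoid (MvPolynomial (Fin n) k) :=
    Submonoid.closure {f : MvPolynomial (Fin n) k | ∃ i ∈ F, f = MvPolynomial.X i} with hM
  set φ : MvPolynomial (Fin n) k →+* k :=
    (MvPolynomial.eval (fun l => if l ∈ F ∨ b l ≠ 0 then (1:k) else 0)) with hφ
  have hunits : ∀ y : M, IsUnit (φ y) := by
    rintro ⟨y, hy⟩
    induction hy using Submonoid.closure_induction with
    | mem x hx => obtain ⟨i, hi, rfl⟩ := hx; simp [hφ, hi]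
    | one => simp
    | mul x y hx hy ihx ihy => rw [map_mul]; exact ihx.mul ihy
  set ψ : locAway k n F →+* k := IsLocalization.lift (M := M) (S := locAway k n F) hunits with hψ
  intro hmem
  have h1 : ψ (algebraMap (MvPolynomial (Fin n) k) (locAway k n F) (∏ i, X i ^ b i)) ∈
      Ideal.map ψ (Ideal.map (algebraMap (MvPolynomial (Fin n) k) (locAway k n F))
        (edgeIdeal k n G)) := Ideal.mem_map_of_mem ψ hmem
  rw [Ideal.map_map] at h1
  have hcomp : ψ.comp (algebraMap (MvPolynomial (Fin n) k) (locAway k n F)) = φ :=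
    IsLocalization.lift_comp hunits
  rw [hcomp] at h1
  have h2 : Ideal.map φ (edgeIdeal k n G) = ⊥ := by
    rw [edgeIdeal, Ideal.map_span]
    refine le_antisymm (Ideal.span_le.mpr ?_) bot_le
    rintro x ⟨f, ⟨i, j, hij, rfl⟩, rfl⟩
    have := h i j hij
    have : φ (X i) = 0 ∨ φ (X j) = 0 := by
      by_contra hc
      push_neg at hc
      refine this ⟨?_, ?_⟩
      · by_contra hc2; exact hc.1 (by simp [hφ, hc2])
      · by_contra hc2; exact hc.2 (by simp [hφ, hc2])
    simp only [SetLike.mem_coe, Ideal.mem_bot, map_mul]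
    rcases this with h0 | h0 <;> simp [h0]
  have h3 : ψ (algebraMap (MvPolynomial (Fin n) k) (locAway k n F) (∏ i, X i ^ b i)) = 1 := by
    have : ψ (algebraMap (MvPolynomial (Fin n) k) (locAway k n F) (∏ i, X i ^ b i)) =
        φ (∏ i, X i ^ b i) := by
      rw [← hcomp]; rfl
    rw [this, hφ]
    rw [map_prod]
    refine Finset.prod_eq_one fun l _ => ?_
    rcases eq_or_ne (b l) 0 with h0 | h0
    · simp [h0]
    · simp [h0]
  rw [h3, h2] at h1
  exact one_ne_zero ((Ideal.mem_bot).mp h1)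

lemma aux_dvd {k : Type} [Field k] {n : ℕ} (c : Fin n → ℕ) {i j : Fin n} (hne : i ≠ j)
    (hi : c i ≠ 0) (hj : c j ≠ 0) :
    ∃ d : Fin n → ℕ, (∏ l, (X l : MvPolynomial (Fin n) k) ^ c l) =
      (X i * X j) * ∏ l, X l ^ d l := by
  classical
  refine ⟨fun l => c l - (if l = i then 1 else 0) - (if l = j then 1 else 0), ?_⟩
  have key : ∀ l, c l = (c l - (if l = i then 1 else 0) - (if l = j then 1 else 0))
      + (if l = i then 1 else 0) + (if l = j then 1 else 0) := by
    intro l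
    by_cases h1 : l = i
    · subst h1
      rw [if_pos rfl, if_neg hne]
      omega
    · by_cases h2 : l = j
      · subst h2
        rw [if_neg h1, if_pos rfl]
        omega
      · rw [if_neg h1, if_neg h2]
        omega
  calc (∏ l, (X l : MvPolynomial (Fin n) k) ^ c l)
      = ∏ l, ((X l) ^ (c l - (if l = i then 1 else 0) - (if l = j then 1 else 0))
          * (X l) ^ (if l = i then 1 else 0) * (X l) ^ (if l = j then 1 else 0)) := by
        refine Finset.prod_congr rfl fun l _ => ?_
        rw [← pow_add, ← pow_add, ← key]
    _ = (∏ l, (X l : MvPolynomial (Fin n) k) ^ (c l - (if l = i then 1 else 0) - (if l = j then 1 else 0)))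
        * (∏ l, (X l : MvPolynomial (Fin n) k) ^ (if l = i then 1 else 0))
        * (∏ l, (X l : MvPolynomial (Fin n) k) ^ (if l = j then 1 else 0)) := by
        rw [Finset.prod_mul_distrib, Finset.prod_mul_distrib]
    _ = (X i * X j) * ∏ l, X l ^ (c l - (if l = i then 1 else 0) - (if l = j then 1 else 0)) := by
        have e1 : (∏ l, (X l : MvPolynomial (Fin n) k) ^ (if l = i then 1 else 0)) = X i := by
          rw [show (fun l => (X l : MvPolynomial (Fin n) k) ^ (if l = i then 1 else 0))
            = fun l => if l = i then X l else 1 from funext fun l => by split <;> simp]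
          simp [Finset.prod_ite_eq']
        have e2 : (∏ l, (X l : MvPolynomial (Fin n) k) ^ (if l = j then 1 else 0)) = X j := by
          rw [show (fun l => (X l : MvPolynomial (Fin n) k) ^ (if l = j then 1 else 0))
            = fun l => if l = j then X l else 1 from funext fun l => by split <;> simp]
          simp [Finset.prod_ite_eq']
        rw [e1, e2]; ring

lemma aux_mem (k : Type) [Field k] (n : ℕ) (G : SimpleGraph (Fin n))
    (F : Finset (Fin n)) (b : Fin n → ℕ) {i j : Fin n} (hij : G.Adj i j)
    (hi : i ∈ F ∨ b i ≠ 0) (hj : j ∈ F ∨ b j ≠ 0) :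
    algebraMap (MvPolynomial (Fin n) k) (locAway k n F) (∏ i, X i ^ b i) ∈
      Ideal.map (algebraMap (MvPolynomial (Fin n) k) (locAway k n F)) (edgeIdeal k n G) := by
  classical
  set f := algebraMap (MvPolynomial (Fin n) k) (locAway k n F) with hf
  set p : MvPolynomial (Fin n) k := ∏ l ∈ F, X l with hp
  have hpM : p ∈ Submonoid.closure
      {f : MvPolynomial (Fin n) k | ∃ i ∈ F, f = MvPolynomial.X i} :=
    Submonoid.prod_mem _ fun l hl => Submonoid.subset_closure ⟨l, hl, rfl⟩
  have hpu : IsUnit (f p) := IsLocalization.map_units (locAway k n F) ⟨p, hpM⟩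
  set c : Fin n → ℕ := fun l => b l + (if l ∈ F then 1 else 0) with hc
  have hmp : (∏ l, X l ^ b l) * p = ∏ l, (X l : MvPolynomial (Fin n) k) ^ c l := by
    have : p = ∏ l, (if l ∈ F then (X l : MvPolynomial (Fin n) k) else 1) := by
      rw [Finset.prod_ite_mem, Finset.univ_inter]
    rw [this, ← Finset.prod_mul_distrib]
    refine Finset.prod_congr rfl fun l _ => ?_
    by_cases h : l ∈ F <;> simp [hc, h, pow_add]
  have hci : c i ≠ 0 := by rcases hi with h | h <;> simp [hc, h]
  have hcj : c j ≠ 0 := by rcases hj with h | h <;> simp [hc, h]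
  obtain ⟨d, hd⟩ := aux_dvd (k := k) c hij.ne hci hcj
  have hIc : (∏ l, (X l : MvPolynomial (Fin n) k) ^ c l) ∈ edgeIdeal k n G := by
    rw [hd]
    exact Ideal.mul_mem_right _ _ (Ideal.subset_span ⟨i, j, hij, rfl⟩)
  have hmem : f ((∏ l, X l ^ b l) * p) ∈
      Ideal.map f (edgeIdeal k n G) := by
    rw [hmp]; exact Ideal.mem_map_of_mem f hIc
  obtain ⟨u, hu⟩ := hpu
  have : f (∏ l, X l ^ b l) = f ((∏ l, X l ^ b l) * p) * ↑u⁻¹ := by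
    rw [map_mul, ← hu, mul_assoc]
    simp
  rw [this]
  exact Ideal.mul_mem_right _ _ hmem

lemma degComplex_eq (k : Type) [Field k] (n : ℕ) (G : SimpleGraph (Fin n)) (a : Fin n → ℤ) :
    degComplex k n (edgeIdeal k n G) a =
      {t | ∃ H ∈ indepComplex G, suppOf n a ⊆ H ∧ t ⊆ H \ negSupp n a} := by
  classical
  ext t
  constructor
  · rintro ⟨F, hGF, hnot, rfl⟩
    refine ⟨F ∪ suppOf n a, ?_, Finset.subset_union_right, ?_⟩
    · intro u hu v hv hadj
      refine hnot (aux_mem k n G F _ hadj ?_ ?_)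
      · rcases Finset.mem_union.mp hu with h | h
        · exact Or.inl h
        · have ha : a u ≠ 0 := (Finset.mem_filter.mp h).2
          rcases lt_or_gt_of_ne ha with hlt | hgt
          · exact Or.inl (hGF (Finset.mem_filter.mpr ⟨Finset.mem_univ _, hlt⟩))
          · exact Or.inr (by simpa using hgt)
      · rcases Finset.mem_union.mp hv with h | h
        · exact Or.inl h
        · have ha : a v ≠ 0 := (Finset.mem_filter.mp h).2
          rcases lt_or_gt_of_ne ha with hlt | hgt
          · exact Or.inl (hGF (Finset.mem_filter.mpr ⟨Finset.mem_univ _, hlt⟩))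
          · exact Or.inr (by simpa using hgt)
    · exact Finset.sdiff_subset_sdiff Finset.subset_union_left subset_rfl
  · rintro ⟨H, hH, hsupp, hts⟩
    have hNsupp : negSupp n a ⊆ suppOf n a := by
      intro u hu
      simp only [negSupp, Finset.mem_filter] at hu
      exact Finset.mem_filter.mpr ⟨Finset.mem_univ _, hu.2.ne⟩
    refine ⟨t ∪ negSupp n a, Finset.subset_union_right, ?_, ?_⟩
    · refine aux_not_mem k n G _ _ ?_
      intro i j hadj ⟨hi, hj⟩
      have memH : ∀ u, (u ∈ t ∪ negSupp n a ∨ (a u).toNat ≠ 0) → u ∈ H := by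
        intro u hu
        rcases hu with hu | hu
        · rcases Finset.mem_union.mp hu with h | h
          · exact (Finset.mem_sdiff.mp (hts h)).1
          · exact hsupp (hNsupp h)
        · refine hsupp (Finset.mem_filter.mpr ⟨Finset.mem_univ _, ?_⟩)
          intro h0
          simp [h0] at hu
      exact hH i (memH i hi) j (memH j hj) hadj
    · have hdisj : Disjoint t (negSupp n a) := by
        refine Finset.disjoint_left.mpr fun u hu hu2 => ?_
        exact (Finset.mem_sdiff.mp (hts hu)).2 hu2
      rw [Finset.union_sdiff_right, Finset.sdiff_eq_self_of_disjoint hdisj]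

lemma indep_mono {n : ℕ} {G : SimpleGraph (Fin n)} {t H : Finset (Fin n)}
    (hsub : t ⊆ H) (hH : H ∈ indepComplex G) : t ∈ indepComplex G :=
  fun u hu v hv => hH u (hsub hu) v (hsub hv)

lemma exists_facet {n : ℕ} (G : SimpleGraph (Fin n)) {H : Finset (Fin n)}
    (hH : H ∈ indepComplex G) :
    ∃ H', isFacet (indepComplex G) H' ∧ H ⊆ H' := by
  obtain ⟨H', ⟨hH'1, hH'2⟩, hmax⟩ := Set.Finite.exists_maximalFor id
    {T | T ∈ indepComplex G ∧ H ⊆ T} (Set.toFinite _) ⟨H, hH, subset_rfl⟩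
  exact ⟨H', ⟨hH'1, fun T hT hsub => subset_antisymm hsub (hmax ⟨hT, hH'2.trans hsub⟩ hsub)⟩, hH'2⟩

lemma negSupp_subset_suppOf (n : ℕ) (a : Fin n → ℤ) : negSupp n a ⊆ suppOf n a := by
  intro u hu
  simp only [negSupp, Finset.mem_filter] at hu
  exact Finset.mem_filter.mpr ⟨Finset.mem_univ _, hu.2.ne⟩


/-- For a graph `G` on `[n]` with edge ideal `I = I(G)` and `a ∈ ℤⁿ`, the facets of
`Δ_a(I)` are exactly the sets `F \ G_a` for facets `F` of `IN(G)` with `Supp(a) ⊆ F`.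
In particular: (i) `Δ_0(I) = IN(G)`; (ii) if `Supp(a) ∉ IN(G)` then `Δ_a(I) = ∅`;
(iii) `Δ_a(I) = {∅}` iff `Supp(a) = G_a` is a facet of `IN(G)`. -/
theorem degComplex_facets (k : Type) [Field k] (n : ℕ) (G : SimpleGraph (Fin n))
    (a : Fin n → ℤ) :
    {s | isFacet (degComplex k n (edgeIdeal k n G) a) s} =
      {s | ∃ F : Finset (Fin n), isFacet (indepComplex G) F ∧ suppOf n a ⊆ F ∧
        s = F \ negSupp n a} ∧
    degComplex k n (edgeIdeal k n G) (fun _ => 0) = indepComplex G ∧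
    (suppOf n a ∉ indepComplex G → degComplex k n (edgeIdeal k n G) a = ∅) ∧
    (degComplex k n (edgeIdeal k n G) a = {∅} ↔
      suppOf n a = negSupp n a ∧ isFacet (indepComplex G) (negSupp n a)) := by
  have hNS := negSupp_subset_suppOf n a
  rw [degComplex_eq, degComplex_eq]
  refine ⟨?_, ?_, ?_, ?_⟩
  · ext s
    simp only [Set.mem_setOf_eq]
    constructor
    · rintro ⟨⟨H, hH, hsupp, hsub⟩, hmax⟩
      obtain ⟨H', hfac, hHH'⟩ := exists_facet G hH
      have hmem : H' \ negSupp n a ∈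
          {t | ∃ H ∈ indepComplex G, suppOf n a ⊆ H ∧ t ⊆ H \ negSupp n a} :=
        ⟨H', hfac.1, hsupp.trans hHH', subset_rfl⟩
      have : s ⊆ H' \ negSupp n a :=
        hsub.trans (Finset.sdiff_subset_sdiff hHH' subset_rfl)
      exact ⟨H', hfac, hsupp.trans hHH', hmax _ hmem this⟩
    · rintro ⟨F, hfac, hsupp, rfl⟩
      refine ⟨⟨F, hfac.1, hsupp, subset_rfl⟩, ?_⟩
      rintro t ⟨H₂, hH₂, hsupp₂, hts⟩ hst
      have hFH₂ : F ⊆ H₂ := by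
        intro u hu
        by_cases hN : u ∈ negSupp n a
        · exact hsupp₂ (hNS hN)
        · exact (Finset.mem_sdiff.mp (hts (hst (Finset.mem_sdiff.mpr ⟨hu, hN⟩)))).1
      have : F = H₂ := hfac.2 H₂ hH₂ hFH₂
      exact subset_antisymm hst (this ▸ hts)
  · ext t
    have hN0 : negSupp n (fun _ => (0:ℤ)) = ∅ := by simp [negSupp]
    have hS0 : suppOf n (fun _ => (0:ℤ)) = ∅ := by simp [suppOf]
    simp only [Set.mem_setOf_eq, hN0, hS0, Finset.empty_subset, true_and,
      Finset.sdiff_empty]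
    constructor
    · rintro ⟨H, hH, hsub⟩
      exact indep_mono hsub hH
    · intro ht
      exact ⟨t, ht, subset_rfl⟩
  · intro hns
    ext t
    simp only [Set.mem_setOf_eq, Set.mem_empty_iff_false, iff_false]
    rintro ⟨H, hH, hsupp, -⟩
    exact hns (indep_mono hsupp hH)
  · constructor
    · intro hΔ
      have h0 : (∅ : Finset (Fin n)) ∈
          {t | ∃ H ∈ indepComplex G, suppOf n a ⊆ H ∧ t ⊆ H \ negSupp n a} := by
        rw [hΔ]; rfl
      obtain ⟨H₀, hH₀, hsupp₀, -⟩ := h0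
      have hmem : H₀ \ negSupp n a ∈
          {t | ∃ H ∈ indepComplex G, suppOf n a ⊆ H ∧ t ⊆ H \ negSupp n a} :=
        ⟨H₀, hH₀, hsupp₀, subset_rfl⟩
      rw [hΔ] at hmem
      have hH₀N : H₀ ⊆ negSupp n a := by
        intro u hu
        by_contra hn
        have : u ∈ H₀ \ negSupp n a := Finset.mem_sdiff.mpr ⟨hu, hn⟩
        rw [hmem] at this
        simp at this
      have hNH₀ : negSupp n a ⊆ H₀ := hNS.trans hsupp₀
      have hEq : H₀ = negSupp n a := subset_antisymm hH₀N hNH₀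
      have hsupEq : suppOf n a = negSupp n a :=
        subset_antisymm (hEq ▸ hsupp₀) hNS
      refine ⟨hsupEq, hEq ▸ hH₀, ?_⟩
      intro T hT hNT
      have hmemT : T \ negSupp n a ∈
          {t | ∃ H ∈ indepComplex G, suppOf n a ⊆ H ∧ t ⊆ H \ negSupp n a} :=
        ⟨T, hT, hsupEq ▸ hNT, subset_rfl⟩
      rw [hΔ] at hmemT
      refine subset_antisymm hNT ?_
      intro u hu
      by_contra hn
      have : u ∈ T \ negSupp n a := Finset.mem_sdiff.mpr ⟨hu, hn⟩
      rw [hmemT] at this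
      simp at this
    · rintro ⟨hsn, hfac⟩
      ext t
      simp only [Set.mem_setOf_eq, Set.mem_singleton_iff]
      constructor
      · rintro ⟨H, hH, hsupp, hts⟩
        have : negSupp n a = H := hfac.2 H hH (hsn ▸ hsupp)
        rw [← this, Finset.sdiff_self] at hts
        exact Finset.subset_empty.mp hts
      · rintro rfl
        exact ⟨negSupp n a, hfac.1, hsn.le, Finset.empty_subset _⟩
end

section
/- Let I ⊆ S = k[x_1,...,x_n] be a monomial ideal and F ⊆ [n]. Then the following are equivalent: (i) the reduced homology in degree -1 of Δ_a(I) vanishes for all a ∈ ℤ^n with G_a = F; (ii) Δ_a(I) ≠ {∅} for all a ∈ ℤ^n with G_a = F; (iii) depth(S_F / I_F) ≥ 1. -/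
/-- The depth of a module `M` over `R` with respect to an ideal `J`, defined as
`min {i : H^i_J(M) ≠ 0}` (with value `⊤` if all local cohomology vanishes). -/
noncomputable def lcDepth {R : Type} [CommRing R] (J : Ideal R) (M : ModuleCat R) : ℕ∞ :=
  sInf {c : ℕ∞ | ∃ i : ℕ, c = i ∧ Nontrivial ((localCohomology J i).obj M)}

/-- The graded maximal ideal `⟨x_i : i⟩` of a polynomial ring. -/
noncomputable def maxIdeal (k : Type) [Field k] (σ : Type) : Ideal (MvPolynomial σ k) :=
  Ideal.span (Set.range MvPolynomial.X)

/-- The ring map `S → S_F` setting `x_i = 1` for `i ∈ F`. -/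
noncomputable def setOneHom (k : Type) [Field k] (n : ℕ) (F : Finset (Fin n)) :
    MvPolynomial (Fin n) k →+* MvPolynomial {i : Fin n // i ∉ F} k :=
  (MvPolynomial.aeval (fun i : Fin n =>
    if h : i ∈ F then 1 else MvPolynomial.X (⟨i, h⟩ : {i : Fin n // i ∉ F}))).toRingHom

/-- The `(-1)`-st reduced simplicial homology of a complex `Δ` over `k`:
`C_{-1}/im ∂₀`, where `C_{-1}` is spanned by the empty face and `∂₀` sends each
vertex of `Δ` to the empty face. -/
noncomputable abbrev redHneg1 (k : Type) [Field k] (V : Type) (Δ : Set (Finset V)) :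
    Type :=
  ({s : Finset V // s ∈ Δ ∧ s = ∅} →₀ k) ⧸
    Submodule.span k {f : {s : Finset V // s ∈ Δ ∧ s = ∅} →₀ k |
      ∃ v : V, ({v} : Finset V) ∈ Δ ∧ ∃ he : (∅ : Finset V) ∈ Δ,
        f = Finsupp.single ⟨∅, he, rfl⟩ 1}


open MvPolynomial CategoryTheory CategoryTheory.Limits localCohomology Opposite

namespace DegAux

section MonomialLoc
variable {k : Type} [Field k] {n : ℕ}

lemma monomial_mem_closure {F : Finset (Fin n)} {u : Fin n →₀ ℕ}
    (hu : ∀ j, j ∉ F → u j = 0) :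
    (monomial u (1:k)) ∈ Submonoid.closure
      {f : MvPolynomial (Fin n) k | ∃ i ∈ F, f = MvPolynomial.X i} := by
  rw [← prod_X_pow_eq_monomial]
  apply Submonoid.prod_mem
  intro j hj
  apply pow_mem
  apply Submonoid.subset_closure
  refine ⟨j, ?_, rfl⟩
  by_contra hjF
  exact (Finsupp.mem_support_iff.mp hj) (hu j hjF)

lemma mem_closure_monomial {F : Finset (Fin n)} {s : MvPolynomial (Fin n) k}
    (hs : s ∈ Submonoid.closure
      {f : MvPolynomial (Fin n) k | ∃ i ∈ F, f = MvPolynomial.X i}) :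
    ∃ u : Fin n →₀ ℕ, (∀ j, j ∉ F → u j = 0) ∧ s = monomial u (1:k) := by
  induction hs using Submonoid.closure_induction with
  | mem x hx =>
    obtain ⟨i, hi, rfl⟩ := hx
    exact ⟨Finsupp.single i 1, fun j hj => Finsupp.single_eq_of_ne (by rintro rfl; exact hj hi),
      by rw [← X_pow_eq_monomial, pow_one]⟩
  | one => exact ⟨0, fun _ _ => rfl, by simp⟩
  | mul x y _ _ hx hy =>
    obtain ⟨u, hu, rfl⟩ := hx
    obtain ⟨v, hv, rfl⟩ := hy
    exact ⟨u + v, fun j hj => by simp [hu j hj, hv j hj], by rw [monomial_mul, one_mul]⟩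

lemma closure_le_nonZeroDivisors (F : Finset (Fin n)) :
    Submonoid.closure {f : MvPolynomial (Fin n) k | ∃ i ∈ F, f = MvPolynomial.X i}
      ≤ nonZeroDivisors (MvPolynomial (Fin n) k) := by
  rw [Submonoid.closure_le]
  rintro f ⟨i, _, rfl⟩
  exact mem_nonZeroDivisors_of_ne_zero (X_ne_zero i)

lemma algebraMap_locAway_injective (F : Finset (Fin n)) :
    Function.Injective (algebraMap (MvPolynomial (Fin n) k) (locAway k n F)) :=
  IsLocalization.injective _ (closure_le_nonZeroDivisors F)

/-- Key membership lemma. -/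
lemma mem_map_locAway_iff {gens : Set (Fin n →₀ ℕ)} {F : Finset (Fin n)} (c : Fin n →₀ ℕ) :
    (algebraMap (MvPolynomial (Fin n) k) (locAway k n F)) (monomial c 1) ∈
      Ideal.map (algebraMap (MvPolynomial (Fin n) k) (locAway k n F))
        (Ideal.span ((fun d => monomial d (1 : k)) '' gens)) ↔
    ∃ d ∈ gens, ∀ j, j ∉ F → d j ≤ c j := by
  constructor
  · intro h
    rw [IsLocalization.mem_map_algebraMap_iff
      (Submonoid.closure {f : MvPolynomial (Fin n) k | ∃ i ∈ F, f = MvPolynomial.X i})] at h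
    classical
    obtain ⟨ps, h⟩ := h
    rw [← map_mul] at h
    have h2 := algebraMap_locAway_injective (k := k) F h
    obtain ⟨u, hu, hsu⟩ := mem_closure_monomial ps.2.2
    rw [hsu, monomial_mul, mul_one] at h2
    have hp := ps.1.2
    rw [← h2, mem_ideal_span_monomial_image] at hp
    obtain ⟨d, hd, hle⟩ := hp (c + u) (by
      rw [support_monomial, if_neg (one_ne_zero)]; exact Finset.mem_singleton_self _)
    exact ⟨d, hd, fun j hj => by
      have := hle j
      simp only [Finsupp.coe_add, Pi.add_apply, hu j hj, add_zero] at this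
      exact this⟩
  · rintro ⟨d, hd, hle⟩
    classical
    have hu : ∀ j, j ∉ F → (d - c) j = 0 := fun j hj => by
      have := hle j hj
      simp only [Finsupp.tsub_apply]
      omega
    have hmem : monomial (c + (d - c)) (1:k) ∈ Ideal.span ((fun d => monomial d (1 : k)) '' gens) := by
      rw [mem_ideal_span_monomial_image]
      intro xi hxi
      rw [support_monomial, if_neg one_ne_zero, Finset.mem_singleton] at hxi
      subst hxi
      refine ⟨d, hd, fun j => ?_⟩
      simp only [Finsupp.coe_add, Pi.add_apply, Finsupp.tsub_apply]
      omega
    have := Ideal.mem_map_of_mem (algebraMap (MvPolynomial (Fin n) k) (locAway k n F)) hmem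
    have heq : monomial c (1:k) * monomial (d - c) (1:k) = monomial (c + (d - c)) (1:k) := by
      rw [monomial_mul, one_mul]
    rw [← heq, map_mul] at this
    obtain ⟨v, hv⟩ := IsLocalization.map_units (locAway k n F)
      (⟨monomial (d - c) (1:k), monomial_mem_closure hu⟩ :
        Submonoid.closure {f : MvPolynomial (Fin n) k | ∃ i ∈ F, f = MvPolynomial.X i})
    have h2 := Ideal.mul_mem_right (↑v⁻¹) _ this
    rwa [mul_assoc, ← hv, Units.mul_inv, mul_one] at h2

/-- prod of X^c equals monomial -/
lemma prod_X_pow_toNat (a : Fin n → ℤ) :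
    (∏ i, (X i : MvPolynomial (Fin n) k) ^ (a i).toNat) =
      monomial (Finsupp.equivFunOnFinite.symm (fun i => (a i).toNat)) 1 := by
  rw [← prod_X_pow_eq_monomial]
  refine (Finset.prod_subset (Finset.subset_univ _) ?_).symm
  intro x _ hx
  have h0 : (a x).toNat = 0 := by
    have := Finsupp.notMem_support_iff.mp hx
    simpa using this
  rw [h0, pow_zero]

/-- `Q c F' = x^c ∈ I·S_(F')` combinatorially -/
def Qp (gens : Set (Fin n →₀ ℕ)) (c : Fin n → ℕ) (F' : Finset (Fin n)) : Prop :=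
  ∃ d ∈ gens, ∀ j, j ∉ F' → d j ≤ c j

lemma Qp_mono {gens : Set (Fin n →₀ ℕ)} {c : Fin n → ℕ} {F₁ F₂ : Finset (Fin n)}
    (h : F₁ ⊆ F₂) : Qp gens c F₁ → Qp gens c F₂ := by
  rintro ⟨d, hd, hle⟩
  exact ⟨d, hd, fun j hj => hle j (fun hj1 => hj (h hj1))⟩



lemma mem_degComplex_iff {gens : Set (Fin n →₀ ℕ)} {a : Fin n → ℤ} {t : Finset (Fin n)} :
    t ∈ degComplex k n (Ideal.span ((fun d => monomial d (1 : k)) '' gens)) a ↔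
      ∃ F' : Finset (Fin n), negSupp n a ⊆ F' ∧
        ¬ Qp gens (fun i => (a i).toNat) F' ∧ t = F' \ negSupp n a := by
  unfold degComplex
  simp only [Set.mem_setOf_eq, prod_X_pow_toNat, mem_map_locAway_iff]
  unfold Qp
  simp only [Finsupp.coe_equivFunOnFinite_symm]

section
variable {gens : Set (Fin n →₀ ℕ)} {a : Fin n → ℤ} {F : Finset (Fin n)} (hF : negSupp n a = F)

lemma empty_mem_degComplex_iff (hF : negSupp n a = F) :
    (∅ : Finset (Fin n)) ∈ degComplex k n (Ideal.span ((fun d => monomial d (1 : k)) '' gens)) a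
      ↔ ¬ Qp gens (fun i => (a i).toNat) F := by
  subst hF
  rw [mem_degComplex_iff]
  constructor
  · rintro ⟨F', hsub, hq, he⟩
    exact fun h => hq (Qp_mono hsub h)
  · intro h
    exact ⟨negSupp n a, le_refl _, h, (Finset.sdiff_self _).symm⟩

lemma singleton_mem_degComplex_iff (hF : negSupp n a = F) (v : Fin n) :
    ({v} : Finset (Fin n)) ∈ degComplex k n
        (Ideal.span ((fun d => monomial d (1 : k)) '' gens)) a
      ↔ v ∉ F ∧ ¬ Qp gens (fun i => (a i).toNat) (insert v F) := by
  subst hF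
  rw [mem_degComplex_iff]
  constructor
  · rintro ⟨F', hsub, hq, he⟩
    have hv : v ∈ F' \ negSupp n a := by rw [← he]; exact Finset.mem_singleton_self v
    rw [Finset.mem_sdiff] at hv
    refine ⟨hv.2, fun h => hq (Qp_mono ?_ h)⟩
    intro x hx
    rcases Finset.mem_insert.mp hx with rfl | hx
    · exact hv.1
    · exact hsub hx
  · rintro ⟨hv, hq⟩
    refine ⟨insert v (negSupp n a), Finset.subset_insert _ _, hq, ?_⟩
    ext x
    simp only [Finset.mem_singleton, Finset.mem_sdiff, Finset.mem_insert]
    constructor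
    · rintro rfl; exact ⟨Or.inl rfl, hv⟩
    · rintro ⟨h1 | h2, h3⟩; · exact h1
      · exact absurd h2 h3

lemma degComplex_ne_singleton_iff (hF : negSupp n a = F) :
    degComplex k n (Ideal.span ((fun d => monomial d (1 : k)) '' gens)) a ≠ {∅} ↔
      (¬ Qp gens (fun i => (a i).toNat) F →
        ∃ j, j ∉ F ∧ ¬ Qp gens (fun i => (a i).toNat) (insert j F)) := by
  subst hF
  constructor
  · intro hne hq
    by_contra hj
    push_neg at hj
    apply hne
    ext t
    simp only [Set.mem_singleton_iff]
    constructor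
    · intro ht
      rw [mem_degComplex_iff] at ht
      obtain ⟨F', hsub, hnq, rfl⟩ := ht
      rw [Finset.sdiff_eq_empty_iff_subset]
      intro x hx
      by_contra hxF
      exact hnq (Qp_mono (Finset.insert_subset hx hsub) (hj x hxF))
    · rintro rfl
      exact (empty_mem_degComplex_iff rfl).mpr hq
  · intro h heq
    have hem : (∅ : Finset (Fin n)) ∈ degComplex k n
        (Ideal.span ((fun d => monomial d (1 : k)) '' gens)) a := by
      rw [heq]; rfl
    obtain ⟨j, hj, hnq⟩ := h ((empty_mem_degComplex_iff rfl).mp hem)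
    have : ({j} : Finset (Fin n)) ∈ degComplex k n
        (Ideal.span ((fun d => monomial d (1 : k)) '' gens)) a :=
      (singleton_mem_degComplex_iff rfl j).mpr ⟨hj, hnq⟩
    rw [heq, Set.mem_singleton_iff] at this
    exact absurd this (Finset.singleton_ne_empty j)
end

lemma subsingleton_redHneg1_iff {V : Type} (Δ : Set (Finset V)) :
    Subsingleton (redHneg1 k V Δ) ↔ ((∅ : Finset V) ∈ Δ → ∃ v : V, ({v} : Finset V) ∈ Δ) := by
  constructor
  · intro hs hem
    by_contra hv
    push_neg at hv
    have hSempty : {f : {s : Finset V // s ∈ Δ ∧ s = ∅} →₀ k |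
        ∃ v : V, ({v} : Finset V) ∈ Δ ∧ ∃ he : (∅ : Finset V) ∈ Δ,
          f = Finsupp.single ⟨∅, he, rfl⟩ 1} = ∅ := by
      ext f
      simp only [Set.mem_setOf_eq, Set.mem_empty_iff_false, iff_false, not_exists]
      rintro v ⟨hv1, _⟩
      exact absurd hv1 (hv v)
    have : Nontrivial (redHneg1 k V Δ) := by
      refine ⟨Submodule.Quotient.mk (Finsupp.single ⟨∅, hem, rfl⟩ 1), 0, fun h => ?_⟩
      rw [Submodule.Quotient.mk_eq_zero] at h
      rw [hSempty, Submodule.span_empty, Submodule.mem_bot] at h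
      have := DFunLike.congr_fun h ⟨∅, hem, rfl⟩
      simp at this
    exact (not_nontrivial_iff_subsingleton.mpr hs) this
  · intro h
    by_cases hem : (∅ : Finset V) ∈ Δ
    · obtain ⟨v, hv⟩ := h hem
      rw [Submodule.Quotient.subsingleton_iff, eq_top_iff]
      intro f _
      have hsub : ∀ t : {s : Finset V // s ∈ Δ ∧ s = ∅}, t = ⟨∅, hem, rfl⟩ :=
        fun t => Subtype.ext t.2.2
      have hf : f = (f ⟨∅, hem, rfl⟩) • Finsupp.single ⟨∅, hem, rfl⟩ 1 := by
        ext t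
        rw [hsub t]
        simp
      rw [hf]
      exact Submodule.smul_mem _ _ (Submodule.subset_span ⟨v, hv, hem, rfl⟩)
    · have : IsEmpty {s : Finset V // s ∈ Δ ∧ s = ∅} :=
        ⟨fun t => hem (t.2.2 ▸ t.2.1)⟩
      have : Subsingleton ({s : Finset V // s ∈ Δ ∧ s = ∅} →₀ k) :=
        ⟨fun f g => Finsupp.ext (fun t => this.elim t)⟩
      exact Quotient.instSubsingletonQuotient _

end MonomialLoc

section LC
variable {R : Type} [CommRing R]

noncomputable section

instance linYonedaRightOp_preservesFiniteColimits (M : ModuleCat.{0} R) :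
    PreservesFiniteColimits ((linearYoneda R (ModuleCat.{0} R)).obj M).rightOp := by
  have h1 : PreservesLimits (((linearYoneda R (ModuleCat.{0} R)).obj M) ⋙ forget (ModuleCat.{0} R)) :=
    (inferInstance : PreservesLimits (yoneda.obj M))
  have h2 : PreservesLimits ((linearYoneda R (ModuleCat.{0} R)).obj M) :=
    preservesLimits_of_reflects_of_preserves _ (forget (ModuleCat.{0} R))
  constructor
  intro J hJ hfin
  haveI : PreservesLimitsOfShape Jᵒᵖ ((linearYoneda R (ModuleCat.{0} R)).obj M) :=
    h2.preservesLimitsOfShape (J := Jᵒᵖ)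
  exact preservesColimitsOfShape_rightOp J ((linearYoneda R (ModuleCat.{0} R)).obj M)

/-- The natural iso `Ext^0(-, M) ≅ Hom(-, M)` as functors `(ModuleCat.{0} R)ᵒᵖ ⥤ ModuleCat.{0} R`. -/
def ext0Iso (M : ModuleCat.{0} R) :
    (((linearYoneda R (ModuleCat.{0} R)).obj M).rightOp.leftDerived 0).leftOp ≅
      (linearYoneda R (ModuleCat.{0} R)).obj M :=
  letI G := (linearYoneda R (ModuleCat.{0} R)).obj M
  letI α : G.rightOp.leftDerived 0 ≅ G.rightOp := G.rightOp.leftDerivedZeroIsoSelf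
  (⟨NatTrans.leftOp α.inv, NatTrans.leftOp α.hom,
    by rw [← NatTrans.leftOp_comp, α.hom_inv_id]; rfl,
    by rw [← NatTrans.leftOp_comp, α.inv_hom_id]; rfl⟩ :
      (G.rightOp.leftDerived 0).leftOp ≅ G.rightOp.leftOp) ≪≫
    G.rightOpLeftOpIso

/-- The diagram of `Ext^0(R/J^t, M)` evaluated at `M` is isomorphic to the Hom-diagram. -/
def diagIso (J : Ideal R) (M : ModuleCat.{0} R) :
    diagram (idealPowersDiagram J) 0 ⋙ (evaluation _ _).obj M ≅
      (ringModIdeals (idealPowersDiagram J)).op ⋙ (linearYoneda R (ModuleCat.{0} R)).obj M :=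
  Functor.isoWhiskerLeft (ringModIdeals (idealPowersDiagram J)).op (ext0Iso M)

end

noncomputable section

def lc0Iso (J : Ideal R) (M : ModuleCat.{0} R) :
    (localCohomology J 0).obj M ≅
      colimit ((ringModIdeals (idealPowersDiagram J)).op ⋙
        (linearYoneda R (ModuleCat.{0} R)).obj M) :=
  colimitObjIsoColimitCompEvaluation _ M ≪≫ HasColimit.isoOfNatIso (diagIso J M)

theorem subsingleton_localCohomology_zero_iff (J : Ideal R) (M : ModuleCat.{0} R) :
    Subsingleton ((localCohomology J 0).obj M) ↔
      ∀ m : M, (∃ t : ℕ, ∀ r ∈ J ^ t, r • m = 0) → m = 0 := by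
  let H := (ringModIdeals (idealPowersDiagram J)).op ⋙ (linearYoneda R (ModuleCat.{0} R)).obj M
  have e : ((localCohomology J 0).obj M : Type) ≃ (↑(colimit H) : Type) :=
    ((forget (ModuleCat.{0} R)).mapIso (lc0Iso J M)).toEquiv
  rw [Equiv.subsingleton_congr e]
  constructor
  · intro hsub m hm
    obtain ⟨t, ht⟩ := hm
    have hker : (J ^ t : Ideal R) ≤ LinearMap.ker (LinearMap.toSpanSingleton R M m) := by
      intro r hr
      rw [LinearMap.mem_ker, LinearMap.toSpanSingleton_apply]
      exact ht r hr
    let φ : ModuleCat.of R (R ⧸ (J ^ t : Ideal R)) ⟶ M :=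
      ModuleCat.ofHom (Submodule.liftQ (J ^ t : Ideal R) (LinearMap.toSpanSingleton R M m) hker)
    let x : H.obj (op (op t)) := φ
    have hx : colimit.ι H (op (op t)) x = 0 := Subsingleton.elim _ _
    obtain ⟨j', i, hi⟩ := Concrete.colimit_rep_eq_zero R H (op (op t)) x hx
    have hi' : ((ringModIdeals (idealPowersDiagram J)).map i.unop ≫ φ :
        ModuleCat.of R (R ⧸ (J ^ (unop (unop j')) : Ideal R)) ⟶ M) = 0 := hi
    have h2 := congrArg (fun f => ModuleCat.Hom.hom f (Submodule.Quotient.mk 1)) hi'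
    have h3 : ((ringModIdeals (idealPowersDiagram J)).map i.unop ≫ φ).hom
        (Submodule.Quotient.mk 1) = m := by
      have h4 : ((ringModIdeals (idealPowersDiagram J)).map i.unop).hom
          (Submodule.Quotient.mk (1 : R)) = Submodule.Quotient.mk (1 : R) := by
        simp only [ringModIdeals]
        erw [Submodule.mapQ_apply]
        rfl
        exact ((idealPowersDiagram J).map i.unop).down.down
      show φ.hom (((ringModIdeals (idealPowersDiagram J)).map i.unop).hom (Submodule.Quotient.mk 1)) = m
      rw [h4]
      show LinearMap.toSpanSingleton R M m 1 = m
      simp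
    rw [← h3]
    exact h2.trans rfl
  · intro htf
    have key : ∀ (i : (ℕᵒᵖ)ᵒᵖ)
        (φ : ModuleCat.of R (R ⧸ (J ^ (unop (unop i)) : Ideal R)) ⟶ M), φ = 0 := by
      intro i φ
      have h1 : φ.hom (Submodule.Quotient.mk 1) = 0 := by
        apply htf
        refine ⟨unop (unop i), fun r hr => ?_⟩
        rw [← map_smul]
        have hsm : r • (Submodule.Quotient.mk 1 : R ⧸ (J ^ (unop (unop i)) : Ideal R)) =
            Submodule.Quotient.mk r := by
          rw [← Submodule.Quotient.mk_smul, smul_eq_mul, mul_one]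
        rw [hsm, (Submodule.Quotient.mk_eq_zero _).mpr hr, map_zero]
      apply ModuleCat.hom_ext
      apply LinearMap.ext
      intro z
      obtain ⟨r, rfl⟩ := Submodule.Quotient.mk_surjective _ z
      have hsm : (Submodule.Quotient.mk r : R ⧸ (J ^ (unop (unop i)) : Ideal R)) =
          r • Submodule.Quotient.mk 1 := by
        rw [← Submodule.Quotient.mk_smul, smul_eq_mul, mul_one]
      rw [hsm, map_smul, h1, smul_zero]
      rfl
    constructor
    intro x y
    obtain ⟨i, φ, rfl⟩ := Concrete.colimit_exists_rep H x
    obtain ⟨j, ψ, rfl⟩ := Concrete.colimit_exists_rep H y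
    have hφ : φ = (0 : ↑(H.obj i)) := key i φ
    have hψ : ψ = (0 : ↑(H.obj j)) := key j ψ
    rw [hφ, hψ, map_zero, map_zero]

end

section Torsion
variable {k : Type} [Field k] {σ : Type} [Fintype σ] [DecidableEq σ]

local notation "deg" c => Finsupp.sum c fun _ e => e

lemma deg_add (c d : σ →₀ ℕ) : (deg (c + d)) = (deg c) + (deg d) :=
  Finsupp.sum_add_index' (fun _ => rfl) (fun _ _ _ => rfl)

lemma maxIdeal_pow_eq (T : ℕ) :
    (maxIdeal k σ) ^ T = Ideal.span
      ((fun c => monomial c (1 : k)) '' {c : σ →₀ ℕ | (deg c) = T}) := by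
  induction T with
  | zero =>
    rw [pow_zero]
    have : {c : σ →₀ ℕ | (deg c) = 0} = {0} := by
      ext c
      simp only [Set.mem_setOf_eq, Set.mem_singleton_iff]
      constructor
      · intro h
        ext j
        by_contra hj
        have hjs : j ∈ c.support := Finsupp.mem_support_iff.mpr (by simpa using hj)
        have : 0 < (deg c) := by
          apply Finset.sum_pos' (fun i _ => Nat.zero_le _)
          exact ⟨j, hjs, Nat.pos_of_ne_zero (by simpa using hj)⟩
        omega
      · rintro rfl; simp
    have h1 : (monomial (0 : σ →₀ ℕ) (1:k)) = 1 := by simp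
    rw [this, Set.image_singleton, h1, Ideal.span_singleton_one]
    exact Ideal.one_eq_top
  | succ T ih =>
    rw [pow_succ, ih]
    have hJ : maxIdeal k σ = Ideal.span
        ((fun c => monomial c (1:k)) '' {c : σ →₀ ℕ | (deg c) = 1}) := by
      unfold maxIdeal
      congr 1
      ext f
      simp only [Set.mem_range, Set.mem_image, Set.mem_setOf_eq]
      constructor
      · rintro ⟨j, rfl⟩
        exact ⟨Finsupp.single j 1, by simp [Finsupp.sum_single_index],
          by rw [← X_pow_eq_monomial, pow_one]⟩
      · rintro ⟨c, hc, rfl⟩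
        obtain ⟨j, hj⟩ : ∃ j, c = Finsupp.single j 1 := by
          have hne : c.support.Nonempty := by
            by_contra h
            rw [Finset.not_nonempty_iff_eq_empty] at h
            have : c = 0 := by ext j; exact Finsupp.notMem_support_iff.mp (h ▸ Finset.notMem_empty j)
            rw [this] at hc
            simp at hc
          obtain ⟨j, hj⟩ := hne
          refine ⟨j, ?_⟩
          have h1 : 1 ≤ c j := Nat.one_le_iff_ne_zero.mpr (Finsupp.mem_support_iff.mp hj)
          ext j'
          rcases eq_or_ne j' j with rfl | hne'
          · have : (deg c) = ∑ i ∈ c.support, c i := rfl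
            by_contra hcj
            have h2 : 2 ≤ c j' := by
              rcases Nat.lt_or_ge (c j') 2 with h | h
              · interval_cases h' : c j' <;> simp_all [Finsupp.single_eq_same]
              · exact h
            have : 2 ≤ (deg c) := le_trans h2 (Finset.single_le_sum (fun i _ => Nat.zero_le _) hj)
            omega
          · simp only [Finsupp.single_eq_of_ne' (Ne.symm hne')]
            by_contra hcj'
            have hj's : j' ∈ c.support := Finsupp.mem_support_iff.mpr hcj'
            have : 2 ≤ (deg c) := by
              have : (deg c) = ∑ i ∈ c.support, c i := rfl
              rw [this]
              calc 2 = 1 + 1 := rfl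
              _ ≤ c j + c j' := Nat.add_le_add h1 (Nat.one_le_iff_ne_zero.mpr hcj')
              _ ≤ ∑ i ∈ c.support, c i := by
                  rw [← Finset.sum_pair (Ne.symm hne')]
                  exact Finset.sum_le_sum_of_subset (by
                    intro x hx
                    simp only [Finset.mem_insert, Finset.mem_singleton] at hx
                    rcases hx with rfl | rfl
                    · exact hj
                    · exact hj's)
            omega
        exact ⟨j, by rw [hj, ← X_pow_eq_monomial, pow_one]⟩
    rw [hJ, Ideal.span_mul_span']
    apply le_antisymm
    · rw [Ideal.span_le]
      rintro z ⟨p, ⟨c, hc, rfl⟩, q, ⟨c', hc', rfl⟩, rfl⟩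
      apply Ideal.subset_span
      refine ⟨c + c', ?_, ?_⟩
      · simp only [Set.mem_setOf_eq] at hc hc'
        simp only [Set.mem_setOf_eq, deg_add, hc, hc']
      · simp [monomial_mul]
    · rw [Ideal.span_le]
      rintro z ⟨c, hc, rfl⟩
      simp only [Set.mem_setOf_eq] at hc
      have hne : c.support.Nonempty := by
        by_contra h
        rw [Finset.not_nonempty_iff_eq_empty] at h
        have : c = 0 := by ext j; exact Finsupp.notMem_support_iff.mp (h ▸ Finset.notMem_empty j)
        rw [this] at hc
        simp at hc
      obtain ⟨j, hj⟩ := hne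
      have h1 : 1 ≤ c j := Nat.one_le_iff_ne_zero.mpr (Finsupp.mem_support_iff.mp hj)
      have hdecomp : c = (c - Finsupp.single j 1) + Finsupp.single j 1 := by
        ext j'
        rcases eq_or_ne j' j with rfl | hne'
        · simp only [Finsupp.coe_add, Pi.add_apply, Finsupp.tsub_apply, Finsupp.single_eq_same]
          omega
        · simp only [Finsupp.coe_add, Pi.add_apply, Finsupp.tsub_apply,
            Finsupp.single_eq_of_ne' (Ne.symm hne')]
          omega
      have hdeg : (deg (c - Finsupp.single j 1)) = T := by
        have := deg_add (c - Finsupp.single j 1) (Finsupp.single j 1)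
        rw [← hdecomp] at this
        rw [hc] at this
        have hs : (deg (Finsupp.single j 1)) = 1 := by
          simp [Finsupp.sum_single_index]
        rw [hs] at this
        omega
      have : monomial c (1:k) = monomial (c - Finsupp.single j 1) 1 * monomial (Finsupp.single j 1) 1 := by
        rw [monomial_mul, one_mul, ← hdecomp]
      show (monomial c (1:k)) ∈ _
      rw [this]
      have hm1 : (monomial (c - Finsupp.single j 1) (1:k)) ∈
          (fun c => monomial c (1:k)) '' {c : σ →₀ ℕ | (Finsupp.sum c fun _ e => e) = T} :=
        ⟨_, hdeg, rfl⟩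
      have hm2 : (monomial (Finsupp.single j 1) (1:k)) ∈
          (fun c => monomial c (1:k)) '' {c : σ →₀ ℕ | (Finsupp.sum c fun _ e => e) = 1} :=
        ⟨_, by simp [Finsupp.sum_single_index], rfl⟩
      exact Ideal.subset_span (Set.mul_mem_mul hm1 hm2)

theorem torsionfree_iff_comb (genSet : Set (σ →₀ ℕ)) :
    (∀ m : (MvPolynomial σ k ⧸ Ideal.span ((fun e => monomial e (1:k)) '' genSet)),
        (∃ t : ℕ, ∀ r ∈ (maxIdeal k σ) ^ t, r • m = 0) → m = 0) ↔
      (∀ b : σ →₀ ℕ, (¬ ∃ e ∈ genSet, ∀ j, e j ≤ b j) →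
        ∃ j : σ, ¬ ∃ e ∈ genSet, ∀ j', j' ≠ j → e j' ≤ b j') := by
  classical
  set IF := Ideal.span ((fun e => monomial e (1:k)) '' genSet) with hIF
  constructor
  · intro htf b hb
    by_contra hj
    push_neg at hj
    choose e he hle using hj
    set t : ℕ := Finset.univ.sup (fun j => e j j) with hts
    have hm : (Submodule.Quotient.mk (monomial b (1:k)) :
        MvPolynomial σ k ⧸ IF) = 0 := by
      apply htf
      refine ⟨Fintype.card σ * t + 1, fun r hr => ?_⟩
      rw [maxIdeal_pow_eq] at hr
      induction hr using Submodule.span_induction with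
      | mem r hrm =>
        obtain ⟨c, hc, rfl⟩ := hrm
        simp only [Set.mem_setOf_eq] at hc
        -- pigeonhole: some j with c j ≥ t
        have hex : ∃ j, t ≤ c j := by
          by_contra hno
          push_neg at hno
          have hbound : (Finsupp.sum c fun _ e => e) ≤ Fintype.card σ * t := by
            calc (Finsupp.sum c fun _ e => e) = ∑ j ∈ c.support, c j := rfl
            _ ≤ ∑ j ∈ c.support, t := Finset.sum_le_sum (fun j _ => Nat.le_of_lt (hno j))
            _ = c.support.card * t := by rw [Finset.sum_const, smul_eq_mul]
            _ ≤ Fintype.card σ * t := Nat.mul_le_mul_right t (Finset.card_le_card (Finset.subset_univ _))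
          omega
        obtain ⟨j, hcj⟩ := hex
        have hmem : monomial c (1:k) * monomial b 1 ∈ IF := by
          rw [monomial_mul, one_mul, hIF, mem_ideal_span_monomial_image]
          intro xi hxi
          rw [support_monomial, if_neg one_ne_zero, Finset.mem_singleton] at hxi
          subst hxi
          refine ⟨e j, he j, ?_⟩
          intro j'
          rcases eq_or_ne j' j with rfl | hne
          · calc e j' j' ≤ t := Finset.le_sup (f := fun j => e j j) (Finset.mem_univ j')
            _ ≤ c j' := hcj
            _ ≤ c j' + b j' := Nat.le_add_right _ _
            _ = (c + b) j' := rfl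
          · calc e j j' ≤ b j' := hle j j' hne
            _ ≤ c j' + b j' := Nat.le_add_left _ _
            _ = (c + b) j' := rfl
        calc (monomial c (1:k)) • (Submodule.Quotient.mk (monomial b (1:k)) :
              MvPolynomial σ k ⧸ IF)
            = Submodule.Quotient.mk (monomial c (1:k) * monomial b 1) := rfl
          _ = 0 := (Submodule.Quotient.mk_eq_zero _).mpr hmem
      | zero => rw [zero_smul]
      | add r s _ _ hr hs => rw [add_smul, hr, hs, add_zero]
      | smul a r _ hr => rw [smul_eq_mul, mul_smul, hr, smul_zero]
    rw [Submodule.Quotient.mk_eq_zero, hIF, mem_ideal_span_monomial_image] at hm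
    obtain ⟨e', he', hle'⟩ := hm b (by
      rw [support_monomial, if_neg one_ne_zero]; exact Finset.mem_singleton_self _)
    exact hb ⟨e', he', fun j => hle' j⟩
  · rintro hcomb m ⟨t, ht⟩
    obtain ⟨f, rfl⟩ := Submodule.Quotient.mk_surjective _ m
    rw [Submodule.Quotient.mk_eq_zero]
    by_contra hf
    rw [hIF, mem_ideal_span_monomial_image] at hf
    push_neg at hf
    obtain ⟨b, hbsupp, hbdiv⟩ := hf
    obtain ⟨j, hj⟩ := hcomb b (by
      rintro ⟨e, he, hle⟩
      exact (hbdiv e he) (Finsupp.le_def.mpr hle))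
    have hXt : (X j : MvPolynomial σ k) ^ t * f ∈ IF := by
      have hXJ : (X j : MvPolynomial σ k) ^ t ∈ (maxIdeal k σ) ^ t :=
        Ideal.pow_mem_pow (Ideal.subset_span (Set.mem_range_self j)) t
      have h0 := ht _ hXJ
      have : ((X j : MvPolynomial σ k) ^ t) • (Submodule.Quotient.mk f :
          MvPolynomial σ k ⧸ IF) = Submodule.Quotient.mk ((X j) ^ t * f) := rfl
      rw [this, Submodule.Quotient.mk_eq_zero] at h0
      exact h0
    rw [hIF, mem_ideal_span_monomial_image] at hXt
    have hsupp : (Finsupp.single j t + b) ∈ ((X j : MvPolynomial σ k) ^ t * f).support := by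
      rw [mem_support_iff, X_pow_eq_monomial, coeff_monomial_mul, one_mul]
      exact mem_support_iff.mp hbsupp
    obtain ⟨e, he, hle⟩ := hXt _ hsupp
    refine hj ⟨e, he, fun j' hj' => ?_⟩
    have := hle j'
    simp only [Finsupp.coe_add, Pi.add_apply, Finsupp.single_eq_of_ne' (Ne.symm hj')] at this
    simpa using this

end Torsion

end LC

section Glue
variable {R : Type} [CommRing R]

lemma one_le_lcDepth_iff {R : Type} [CommRing R] (J : Ideal R) (M : ModuleCat R) :
    1 ≤ lcDepth J M ↔ Subsingleton ((localCohomology J 0).obj M) := by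
  unfold lcDepth
  constructor
  · intro h
    rw [← not_nontrivial_iff_subsingleton]
    intro hnt
    have h0 : (0 : ℕ∞) ∈ {c : ℕ∞ | ∃ i : ℕ, c = i ∧
        Nontrivial ((localCohomology J i).obj M)} := ⟨0, by simp, hnt⟩
    have := le_trans h (sInf_le h0)
    simp at this
  · intro hs
    apply le_sInf
    rintro c ⟨i, rfl, hnt⟩
    rcases Nat.eq_zero_or_pos i with rfl | hi
    · exact absurd hnt (not_nontrivial_iff_subsingleton.mpr hs)
    · exact_mod_cast hi

variable {k : Type} [Field k] {n : ℕ} {F : Finset (Fin n)}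

lemma setOneHom_monomial (d : Fin n →₀ ℕ) (c : k) :
    setOneHom k n F (monomial d c) =
      monomial (Finsupp.subtypeDomain (fun i => i ∉ F) d) c := by
  classical
  induction d using Finsupp.induction with
  | zero =>
    rw [show (monomial (0 : Fin n →₀ ℕ)) c = C c from congrFun monomial_zero' c]
    rw [show (Finsupp.subtypeDomain (fun i => i ∉ F) (0 : Fin n →₀ ℕ)) = 0 from rfl]
    rw [show (monomial (0 : {i : Fin n // i ∉ F} →₀ ℕ)) c = C c from congrFun monomial_zero' c]
    simp [setOneHom]
  | single_add a e f ha he ih =>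
    have hsplit : monomial (Finsupp.single a e + f) c =
        monomial (Finsupp.single a e) 1 * monomial f c := by
      rw [monomial_mul, one_mul]
    rw [hsplit, map_mul, ih]
    have h1 : setOneHom k n F (monomial (Finsupp.single a e) 1) =
        monomial (Finsupp.subtypeDomain (fun i => i ∉ F) (Finsupp.single a e)) 1 := by
      rw [← X_pow_eq_monomial, map_pow]
      have hX : setOneHom k n F (X a) =
          if h : a ∈ F then 1 else X (⟨a, h⟩ : {i : Fin n // i ∉ F}) := by
        simp [setOneHom]
      rw [hX]
      by_cases haF : a ∈ F
      · rw [dif_pos haF, one_pow]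
        have : Finsupp.subtypeDomain (fun i => i ∉ F) (Finsupp.single a e) = 0 := by
          ext j
          rw [Finsupp.subtypeDomain_apply]
          exact Finsupp.single_eq_of_ne' (fun hc => j.2 (hc ▸ haF))
        rw [this]
        simp
      · rw [dif_neg haF]
        have : Finsupp.subtypeDomain (fun i => i ∉ F) (Finsupp.single a e) =
            Finsupp.single (⟨a, haF⟩ : {i : Fin n // i ∉ F}) e := by
          ext j
          rw [Finsupp.subtypeDomain_apply]
          rcases eq_or_ne j (⟨a, haF⟩ : {i : Fin n // i ∉ F}) with rfl | hne
          · simp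
          · rw [Finsupp.single_eq_of_ne' (Ne.symm hne),
              Finsupp.single_eq_of_ne' (fun hc => hne (Subtype.ext hc.symm))]
        rw [this, ← X_pow_eq_monomial]
    rw [h1]
    have : Finsupp.subtypeDomain (fun i => i ∉ F) (Finsupp.single a e + f) =
        Finsupp.subtypeDomain (fun i => i ∉ F) (Finsupp.single a e) +
          Finsupp.subtypeDomain (fun i => i ∉ F) f := by
      ext j; simp [Finsupp.subtypeDomain_apply]
    rw [this, ← one_mul c, ← monomial_mul, one_mul c]

lemma map_setOneHom_span (gens : Set (Fin n →₀ ℕ)) :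
    Ideal.map (setOneHom k n F) (Ideal.span ((fun d => monomial d (1 : k)) '' gens)) =
      Ideal.span ((fun e => monomial e (1 : k)) ''
        ((fun d => Finsupp.subtypeDomain (fun i => i ∉ F) d) '' gens)) := by
  rw [Ideal.map_span, ← Set.image_comp, ← Set.image_comp]
  congr 1
  ext p
  constructor
  · rintro ⟨d, hd, rfl⟩
    exact ⟨d, hd, (setOneHom_monomial (k := k) d 1).symm⟩
  · rintro ⟨d, hd, rfl⟩
    exact ⟨d, hd, setOneHom_monomial d 1⟩


lemma subsingleton_lc_of_iff {R : Type} [CommRing R] (J : Ideal R) (X : Type) [AddCommGroup X]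
    [Module R X] :
    Subsingleton ((localCohomology J 0).obj (ModuleCat.of R X)) ↔
      ∀ m : X, (∃ t : ℕ, ∀ r ∈ J ^ t, r • m = 0) → m = 0 :=
  subsingleton_localCohomology_zero_iff J (ModuleCat.of R X)

variable {k : Type} [Field k] {n : ℕ}

lemma Qp_congr {gens : Set (Fin n →₀ ℕ)} {c₁ c₂ : Fin n → ℕ} {F' : Finset (Fin n)}
    (h : ∀ j, j ∉ F' → c₁ j = c₂ j) : Qp gens c₁ F' ↔ Qp gens c₂ F' := by
  unfold Qp
  constructor <;> rintro ⟨d, hd, hle⟩ <;> refine ⟨d, hd, fun j hj => ?_⟩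
  · rw [← h j hj]; exact hle j hj
  · rw [h j hj]; exact hle j hj

lemma comb_iff {gens : Set (Fin n →₀ ℕ)} {F : Finset (Fin n)} :
    (∀ b : {i : Fin n // i ∉ F} →₀ ℕ,
        (¬ ∃ e ∈ (fun d => Finsupp.subtypeDomain (fun i => i ∉ F) d) '' gens,
            ∀ j, e j ≤ b j) →
        ∃ j, ¬ ∃ e ∈ (fun d => Finsupp.subtypeDomain (fun i => i ∉ F) d) '' gens,
          ∀ j', j' ≠ j → e j' ≤ b j') ↔
      (∀ c : Fin n → ℕ, ¬ Qp gens c F → ∃ j, j ∉ F ∧ ¬ Qp gens c (insert j F)) := by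
  constructor
  · intro h c hc
    set b : {i : Fin n // i ∉ F} →₀ ℕ :=
      Finsupp.equivFunOnFinite.symm (fun j => c j.1) with hb
    have hbv : ∀ j : {i : Fin n // i ∉ F}, b j = c j.1 := fun j => rfl
    obtain ⟨j, hj⟩ := h b (by
      rintro ⟨e, ⟨d, hd, rfl⟩, hle⟩
      refine hc ⟨d, hd, fun i hi => ?_⟩
      have := hle ⟨i, hi⟩
      rwa [Finsupp.subtypeDomain_apply, hbv] at this)
    refine ⟨j.1, j.2, ?_⟩
    rintro ⟨d, hd, hle⟩
    refine hj ⟨Finsupp.subtypeDomain (fun i => i ∉ F) d, ⟨d, hd, rfl⟩, fun j' hj' => ?_⟩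
    rw [Finsupp.subtypeDomain_apply, hbv]
    refine hle j'.1 ?_
    rw [Finset.mem_insert]
    rintro (h1 | h2)
    · exact hj' (Subtype.ext h1)
    · exact j'.2 h2
  · intro h b hb
    set c : Fin n → ℕ := fun i => if h : i ∉ F then b ⟨i, h⟩ else 0 with hcdef
    have hcv : ∀ j : {i : Fin n // i ∉ F}, c j.1 = b j := fun j => dif_pos j.2
    obtain ⟨j0, hj0F, hq⟩ := h c (by
      rintro ⟨d, hd, hle⟩
      refine hb ⟨Finsupp.subtypeDomain (fun i => i ∉ F) d, ⟨d, hd, rfl⟩, fun j => ?_⟩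
      rw [Finsupp.subtypeDomain_apply, ← hcv]
      exact hle j.1 j.2)
    refine ⟨⟨j0, hj0F⟩, ?_⟩
    rintro ⟨e, ⟨d, hd, rfl⟩, hle⟩
    refine hq ⟨d, hd, fun i hi => ?_⟩
    rw [Finset.mem_insert] at hi
    push_neg at hi
    have := hle ⟨i, hi.2⟩ (fun hc' => hi.1 (congrArg Subtype.val hc'))
    rwa [Finsupp.subtypeDomain_apply, ← hcv] at this

end Glue

end DegAux

open DegAux

/-- For a monomial ideal `I ⊆ S = k[x_1,…,x_n]` and `F ⊆ [n]`, the following are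
equivalent: (i) `H̃_{-1}(Δ_a(I)) = 0` for all `a ∈ ℤⁿ` with `G_a = F`;
(ii) `Δ_a(I) ≠ {∅}` for all `a ∈ ℤⁿ` with `G_a = F`; (iii) `depth(S_F/I_F) ≥ 1`. -/
theorem redHneg1_vanishing_iff (k : Type) [Field k] (n : ℕ)
    (I : Ideal (MvPolynomial (Fin n) k))
    (hmono : ∃ gens : Set (Fin n →₀ ℕ),
      I = Ideal.span ((fun d => MvPolynomial.monomial d (1 : k)) '' gens))
    (F : Finset (Fin n)) :
    ((∀ a : Fin n → ℤ, negSupp n a = F →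
        Subsingleton (redHneg1 k (Fin n) (degComplex k n I a))) ↔
      (∀ a : Fin n → ℤ, negSupp n a = F → degComplex k n I a ≠ {∅})) ∧
    ((∀ a : Fin n → ℤ, negSupp n a = F → degComplex k n I a ≠ {∅}) ↔
      1 ≤ lcDepth (maxIdeal k {i : Fin n // i ∉ F})
        (ModuleCat.of (MvPolynomial {i : Fin n // i ∉ F} k)
          (MvPolynomial {i : Fin n // i ∉ F} k ⧸ Ideal.map (setOneHom k n F) I))) := by
  classical
  obtain ⟨gens, rfl⟩ := hmono
  constructor
  · refine forall_congr' fun a => imp_congr_right fun ha => ?_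
    rw [subsingleton_redHneg1_iff, degComplex_ne_singleton_iff ha,
      empty_mem_degComplex_iff ha]
    constructor
    · intro h hq
      obtain ⟨v, hv⟩ := h hq
      rw [singleton_mem_degComplex_iff ha v] at hv
      exact ⟨v, hv.1, hv.2⟩
    · intro h hq
      obtain ⟨j, hj1, hj2⟩ := h hq
      exact ⟨j, (singleton_mem_degComplex_iff ha j).mpr ⟨hj1, hj2⟩⟩
  · rw [one_le_lcDepth_iff, map_setOneHom_span, subsingleton_lc_of_iff,
      torsionfree_iff_comb, comb_iff]
    constructor
    · intro hall c hc
      set a : Fin n → ℤ := fun i => if i ∈ F then (-1 : ℤ) else (c i : ℤ) with hadef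
      have ha : negSupp n a = F := by
        ext i
        simp only [negSupp, Finset.mem_filter, Finset.mem_univ, true_and, hadef]
        by_cases hi : i ∈ F
        · simp [hi]
        · simp only [hi, if_neg hi, iff_false]
          exact not_lt.mpr (Int.natCast_nonneg _)
      have hcc : ∀ j, j ∉ F → (a j).toNat = c j := by
        intro j hj
        simp [hadef, hj]
      have h1 := (degComplex_ne_singleton_iff ha).mp (hall a ha)
      rw [Qp_congr hcc] at h1
      obtain ⟨j, hjF, hj⟩ := h1 hc
      refine ⟨j, hjF, ?_⟩
      rwa [Qp_congr (c₂ := c) (fun j' hj' => hcc j' (fun h' => hj' (Finset.mem_insert_of_mem h')))]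
        at hj
    · intro hcomb a ha
      rw [degComplex_ne_singleton_iff ha]
      exact hcomb (fun i => (a i).toNat)
end

section
/- Let I = (I_n)_{n≥1} be an Inc-invariant chain of ideals with stability index r. Then for any n ≥ r and any subset Λ ⊆ {0,1,...,n} with |Λ| = r + 1, it holds that I_{n+1} = Σ_{k∈Λ} σ_k(I_n), where σ_k(I_n) denotes the ideal of R_{n+1} generated by the images of elements of I_n under σ_k. -/
/-!
Past the stability index, `I_{n+1}` is generated by the images `π(g)` of generators `g` of `I_r`
involving only `x_1, …, x_r`, under increasing maps `π` with `π(r) ≤ n + 1`. Such a `π` takes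
at most `r` values on `1, …, r`, so among the `r + 1` indices `k ∈ Λ` some `x_{k+1}` is missed;
then `π` agrees on `1, …, r` with `σ_k ∘ τ` for an increasing `τ` with `τ(r) ≤ n`, and
`π(g) = σ_k(τ(g)) ∈ σ_k(I_n)`.
-/

open MvPolynomial

/-- The strictly increasing map `σ_k : ℕ → ℕ` fixing `i ≤ k` and sending
`i ↦ i + 1` for `i ≥ k + 1`. -/
def sigmaMap (k : ℕ) : ℕ → ℕ := fun i => if i ≤ k then i else i + 1

/-- The ideal `⟨Inc_{m,n}(I)⟩` generated by all images of elements of `I` under strictly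
increasing maps `π` with `π(m) ≤ n`. -/
noncomputable def incSpan (K : Type) [Field K] (I : Ideal (MvPolynomial ℕ K)) (m n : ℕ) :
    Ideal (MvPolynomial ℕ K) :=
  Ideal.span {f | ∃ π : ℕ → ℕ, StrictMono π ∧ π m ≤ n ∧ ∃ g ∈ I, f = rename π g}

/-- The ideal `σ_k(I)` generated by the image of `I` under `σ_k`. -/
noncomputable def sigmaIdeal (K : Type) [Field K] (k : ℕ) (I : Ideal (MvPolynomial ℕ K)) :
    Ideal (MvPolynomial ℕ K) :=
  Ideal.span ((rename (sigmaMap k)) '' I)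

lemma sigmaMap_strictMono (k : ℕ) : StrictMono (sigmaMap k) := fun a b hab => by
  simp only [sigmaMap]
  split <;> split <;> omega

lemma sigmaMap_le_succ (k i : ℕ) : sigmaMap k i ≤ i + 1 := by
  simp only [sigmaMap]
  split <;> omega

lemma rename_eq_of_eqOn_of_mem_supported {σ τ R : Type*} [CommSemiring R] {f g : σ → τ}
    {s : Set σ} {p : MvPolynomial σ R} (hp : p ∈ supported R s) (hfg : Set.EqOn f g s) :
    rename f p = rename g p := by
  rw [supported_eq_range_rename] at hp
  obtain ⟨q, rfl⟩ := hp
  simp only [AlgHom.toRingHom_eq_coe, RingHom.coe_coe, rename_rename]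
  rw [show f ∘ ((↑) : s → σ) = g ∘ (↑) from funext fun i => hfg i.2]

/-- Pigeonhole: `π` takes at most `r` values on `1, …, r`. -/
lemma exists_mem_forall_ne_succ (π : ℕ → ℕ) {r : ℕ} {Λ : Finset ℕ} (hΛ : r < Λ.card) :
    ∃ j ∈ Λ, ∀ i ∈ Finset.Icc 1 r, π i ≠ j + 1 := by
  have hcard : ((Finset.Icc 1 r).image π).card < (Λ.image (· + 1)).card := by
    rw [Finset.card_image_of_injective _ (add_left_injective 1)]
    exact (Finset.card_image_le.trans (by simp)).trans_lt hΛ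
  obtain ⟨_, hmem, hnot⟩ := Finset.exists_mem_notMem_of_card_lt_card hcard
  obtain ⟨j, hj, rfl⟩ := Finset.mem_image.mp hmem
  exact ⟨j, hj, fun i hi he => hnot (Finset.mem_image.mpr ⟨i, hi, he⟩)⟩

/-- `τ` lowers by one the values `π i > j` with `i ≤ r`; it stays increasing because these
values skip `j + 1` (for `i ≥ 1`). -/
lemma exists_strictMono_sigmaMap_comp_eqOn {π : ℕ → ℕ} (hπ : StrictMono π) {r j n : ℕ}
    (hjn : j ≤ n) (hπr : π r ≤ n + 1) (hπj : ∀ i ∈ Finset.Icc 1 r, π i ≠ j + 1) :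
    ∃ τ : ℕ → ℕ, StrictMono τ ∧ τ r ≤ n ∧
      Set.EqOn (sigmaMap j ∘ τ) π {i | 1 ≤ i ∧ i ≤ r} := by
  refine ⟨fun i => if i ≤ r ∧ j < π i then π i - 1 else π i, fun a b hab => ?_, ?_, ?_⟩
  · have hπab := hπ hab
    have hπb : b ≤ r → π b ≠ j + 1 := fun hbr => hπj b (Finset.mem_Icc.mpr ⟨by omega, hbr⟩)
    dsimp only
    split_ifs <;> omega
  · dsimp only
    split_ifs <;> omega
  · rintro i ⟨hi1, hir⟩
    have hπi := hπj i (Finset.mem_Icc.mpr ⟨hi1, hir⟩)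
    simp only [Function.comp, sigmaMap]
    split_ifs <;> omega

section Ideals

variable {K : Type} [Field K]

lemma rename_mem_incSpan {I : Ideal (MvPolynomial ℕ K)} {m n : ℕ} {π : ℕ → ℕ}
    (hπ : StrictMono π) (hπm : π m ≤ n) {g : MvPolynomial ℕ K} (hg : g ∈ I) :
    rename π g ∈ incSpan K I m n :=
  Ideal.subset_span ⟨π, hπ, hπm, g, hg, rfl⟩

lemma rename_sigmaMap_mem_sigmaIdeal {I : Ideal (MvPolynomial ℕ K)} (k : ℕ)
    {g : MvPolynomial ℕ K} (hg : g ∈ I) : rename (sigmaMap k) g ∈ sigmaIdeal K k I :=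
  Ideal.subset_span ⟨g, hg, rfl⟩

lemma sigmaIdeal_le_incSpan (I : Ideal (MvPolynomial ℕ K)) (k n : ℕ) :
    sigmaIdeal K k I ≤ incSpan K I n (n + 1) :=
  Ideal.span_le.mpr fun _ ⟨_, hg, hf⟩ =>
    hf ▸ rename_mem_incSpan (sigmaMap_strictMono k) (sigmaMap_le_succ k n) hg

lemma incSpan_le_of_eq_span_supported {I J : Ideal (MvPolynomial ℕ K)} {s : Set ℕ} {m n : ℕ}
    (hI : I = Ideal.span ((I : Set (MvPolynomial ℕ K)) ∩ supported K s))
    (hJ : ∀ π : ℕ → ℕ, StrictMono π → π m ≤ n →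
      ∀ g ∈ I, g ∈ supported K s → rename π g ∈ J) :
    incSpan K I m n ≤ J := by
  refine Ideal.span_le.mpr ?_
  rintro _ ⟨π, hπ, hπm, g, hg, rfl⟩
  have hmap : rename π g ∈ Ideal.map (rename π) I := Ideal.mem_map_of_mem _ hg
  rw [hI, Ideal.map_span] at hmap
  refine Ideal.span_le.mpr ?_ hmap
  rintro _ ⟨g', ⟨hg'I, hg's⟩, rfl⟩
  exact hJ π hπ hπm g' hg'I hg's

end Ideals

theorem chain_sum_decomposition_general (K : Type) [Field K]
    (I : ℕ → Ideal (MvPolynomial ℕ K)) (r : ℕ)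
    (hsupp : ∀ n, I n = Ideal.span ((I n : Set (MvPolynomial ℕ K)) ∩
      ↑(MvPolynomial.supported K {i | 1 ≤ i ∧ i ≤ n})))
    (hstab : ∀ m n, r ≤ m → m ≤ n → incSpan K (I m) m n = I n) :
    ∀ n, r ≤ n → ∀ Λ : Finset ℕ, ↑Λ ⊆ Set.Iic n → Λ.card = r + 1 →
      I (n + 1) = ⨆ k ∈ Λ, sigmaIdeal K k (I n) := by
  intro n hn Λ hΛ hcard
  apply le_antisymm
  · rw [← hstab r (n + 1) le_rfl (by omega)]
    refine incSpan_le_of_eq_span_supported (hsupp r) fun π hπ hπr g hg hgs => ?_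
    obtain ⟨j, hjΛ, hπj⟩ := exists_mem_forall_ne_succ π (show r < Λ.card by omega)
    obtain ⟨τ, hτ, hτr, hτπ⟩ := exists_strictMono_sigmaMap_comp_eqOn hπ (hΛ hjΛ) hπr hπj
    have hτg : rename τ g ∈ I n := hstab r n le_rfl hn ▸ rename_mem_incSpan hτ hτr hg
    have hπg : rename π g = rename (sigmaMap j) (rename τ g) := by
      rw [rename_rename, rename_eq_of_eqOn_of_mem_supported hgs hτπ]
    rw [hπg]
    exact Ideal.mem_iSup_of_mem j <| Ideal.mem_iSup_of_mem hjΛ <|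
      rename_sigmaMap_mem_sigmaIdeal j hτg
  · exact iSup₂_le fun k _ =>
      (sigmaIdeal_le_incSpan (I n) k n).trans (hstab n (n + 1) hn (by omega)).le

/-- Let `(I_n)` be an `Inc`-invariant chain of ideals (each `I_n` generated by polynomials
in the variables `x_1, …, x_n`, modelled as ideals of `K[x_i : i ∈ ℕ]` extended from
`R_n`) with stability index `r`, so that `I_{n+1} = Σ_{k=0}^{n} σ_k(I_n)` for `n ≥ r`.
Then for any `n ≥ r` and any `Λ ⊆ {0,1,…,n}` with `|Λ| = r + 1`,
`I_{n+1} = Σ_{k ∈ Λ} σ_k(I_n)`. -/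
theorem chain_sum_decomposition (K : Type) [Field K]
    (I : ℕ → Ideal (MvPolynomial ℕ K)) (r : ℕ)
    (hsupp : ∀ n, I n = Ideal.span ((I n : Set (MvPolynomial ℕ K)) ∩
      ↑(MvPolynomial.supported K {i | 1 ≤ i ∧ i ≤ n})))
    (hinv : ∀ m n, m ≤ n → incSpan K (I m) m n ≤ I n)
    (hstab : ∀ m n, r ≤ m → m ≤ n → incSpan K (I m) m n = I n)
    (hsum : ∀ n, r ≤ n → I (n + 1) = ⨆ k ∈ Finset.range (n + 1), sigmaIdeal K k (I n)) :
    ∀ n, r ≤ n → ∀ Λ : Finset ℕ, ↑Λ ⊆ Set.Iic n → Λ.card = r + 1 →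
      I (n + 1) = ⨆ k ∈ Λ, sigmaIdeal K k (I n) :=
  chain_sum_decomposition_general K I r hsupp hstab
end

section
/- Let (G_n) be the chain of graphs corresponding to an Inc-invariant chain of edge ideals with stability index r, with edges of G_n determined by: (k,l) ∈ E(G_n) iff (k,l) ∈ Δ((i,j), n-r) for some edge (i,j) of G_r with i < j ≤ r. Assume n ≥ 3r. If (k,l) is an edge of G_n with k < l, and k ≤ k' ≤ r and n - r ≤ l' ≤ l are integers, then both (k,l') and (k',l) are edges of G_n (short east and south moves). -/
/-- `(k,l)` lies in the triangle `Δ((i,j), n-r)` for some edge `(i,j) ∈ E` of `G_r`,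
i.e. `0 ≤ k - i ≤ l - j ≤ n - r` (written additively). -/
def triRel (E : Set (ℕ × ℕ)) (r n k l : ℕ) : Prop :=
  ∃ q ∈ E, q.1 ≤ k ∧ k + q.2 ≤ l + q.1 ∧ l + r ≤ n + q.2

/-- The graph `G_n` of the invariant chain determined by the edge set `E` of `G_r`:
`(k,l)` with `k < l` is an edge of `G_n` iff `(k,l) ∈ Δ((i,j), n-r)` for some `(i,j) ∈ E`. -/
def chainGraph (E : Set (ℕ × ℕ)) (r n : ℕ) : SimpleGraph ℕ :=
  SimpleGraph.fromRel (triRel E r n)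

/-- `E` is a set of edges `(i,j)` of a graph `G_r` on `{1,…,r}` with `i < j`. -/
def goodEdges (E : Set (ℕ × ℕ)) (r : ℕ) : Prop :=
  ∀ q ∈ E, 1 ≤ q.1 ∧ q.1 < q.2 ∧ q.2 ≤ r

/-!
Moving `(k,l)` inside `Δ((i,j), n-r)` to `(k',l')` with `k ≤ k'` and `l' ≤ l` keeps the
constraints `i ≤ k'` and `l' - j ≤ n - r`; the only one that can fail is `k' - i ≤ l' - j`.
It cannot fail for short moves: `k' ≤ r`, `j ≤ r` and `l' ≥ n - r ≥ 2r` give `k' + j ≤ l'`.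
-/

section

variable {E : Set (ℕ × ℕ)} {r n k l : ℕ}

theorem triRel.lt (hE : goodEdges E r) (h : triRel E r n k l) : k < l := by
  obtain ⟨q, hq, -, hkl, -⟩ := h
  have := (hE q hq).2.1
  omega

theorem chainGraph_adj_of_triRel (hE : goodEdges E r) (h : triRel E r n k l) :
    (chainGraph E r n).Adj k l :=
  SimpleGraph.fromRel_adj _ _ _ |>.2 ⟨(h.lt hE).ne, Or.inl h⟩

theorem chainGraph_adj_iff_triRel (hE : goodEdges E r) (hkl : k ≤ l) :
    (chainGraph E r n).Adj k l ↔ triRel E r n k l := by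
  refine ⟨fun hadj => ?_, chainGraph_adj_of_triRel hE⟩
  obtain ⟨-, h | h⟩ := (SimpleGraph.fromRel_adj _ _ _).1 hadj
  · exact h
  · exact absurd (h.lt hE) hkl.not_gt

theorem triRel.short_move (hE : goodEdges E r) (hn : 3 * r ≤ n) (h : triRel E r n k l)
    {k' l' : ℕ} (hk' : k ≤ k') (hk'r : k' ≤ r) (hl' : n - r ≤ l') (hl'l : l' ≤ l) :
    triRel E r n k' l' := by
  obtain ⟨q, hq, hik, -, hln⟩ := h
  have hjr := (hE q hq).2.2
  exact ⟨q, hq, by omega, by omega, by omega⟩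

end

/-- Short east and short south moves: for `n ≥ 3r`, if `(k,l)` is an edge of `G_n` with
`k < l`, `k ≤ k' ≤ r` and `n - r ≤ l' ≤ l`, then `(k,l')` and `(k',l)` are edges of `G_n`. -/
theorem short_east_south_moves (E : Set (ℕ × ℕ)) (r n : ℕ) (hE : goodEdges E r)
    (hn : 3 * r ≤ n) (k l k' l' : ℕ) (hkl : k < l)
    (hadj : (chainGraph E r n).Adj k l)
    (hk' : k ≤ k') (hk'r : k' ≤ r) (hl' : n - r ≤ l') (hl'l : l' ≤ l) :
    (chainGraph E r n).Adj k l' ∧ (chainGraph E r n).Adj k' l := by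
  have h := (chainGraph_adj_iff_triRel hE hkl.le).1 hadj
  exact ⟨chainGraph_adj_of_triRel hE (h.short_move hE hn le_rfl (hk'.trans hk'r) hl' hl'l),
    chainGraph_adj_of_triRel hE (h.short_move hE hn hk' hk'r (hl'.trans hl'l) le_rfl)⟩
end

section
/- Let (G_n) be the chain of graphs as above with stability index r, and suppose n ≥ 3r. If (u_1,v_1) and (u_2,v_2) are edges of G_n (with u_i < v_i) forming an induced matching of G_n, then the intervals [u_1, v_1] and [u_2, v_2] are disjoint. -/
/-!
The triangle `Δ((i,j), n-r)` is cut out by three half-planes: `i ≤ k` (left side),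
`l - k ≥ j - i` (diagonal) and `l ≤ n - r + j` (top). Take `u₁ < u₂` and suppose the intervals
meet. A pair of matching vertices lying inside one of the two edges is not an edge, so it leaves
the triangle of that edge through the diagonal: its gap is shorter than `r`. A pair spanning more
than one of the edges leaves through the left side or the top. Hence the stretch from `u₁` to the
rightmost endpoint is covered by at most three gaps shorter than `r`, yet starts below `r` and
ends above `n - r`, which is impossible for `n ≥ 3r`.
-/

theorem Set.Icc_disjoint_Icc_of_lt {α : Type*} [Preorder α] {a b c d : α} (h : b < c) :
    Disjoint (Set.Icc a b) (Set.Icc c d) :=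
  Set.disjoint_left.mpr fun _ hx hy => (hy.1.trans hx.2).not_gt h

section ChainGraph

variable {E : Set (ℕ × ℕ)} {r n : ℕ}

theorem triRel_of_chainGraph_adj (hE : goodEdges E r) {k l : ℕ} (hkl : k < l)
    (h : (chainGraph E r n).Adj k l) : triRel E r n k l := by
  obtain ⟨-, h | ⟨q, hq, hi, hd, -⟩⟩ := h
  · exact h
  · have := hE q hq
    omega

theorem lt_or_lt_or_lt_of_not_chainGraph_adj {q : ℕ × ℕ} (hq : q ∈ E) {x y : ℕ} (hxy : x ≠ y)
    (h : ¬ (chainGraph E r n).Adj x y) : x < q.1 ∨ y + q.1 < x + q.2 ∨ n + q.2 < y + r := by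
  by_contra! hc
  exact h ⟨hxy, Or.inl ⟨q, hq, hc⟩⟩

theorem lt_of_induced_matching_of_lt (hE : goodEdges E r) (hn : 3 * r ≤ n)
    {u₁ v₁ u₂ v₂ : ℕ} (h1 : (chainGraph E r n).Adj u₁ v₁) (h2 : (chainGraph E r n).Adj u₂ v₂)
    (hv1 : u₁ < v₁) (hv2 : u₂ < v₂) (hu : u₁ < u₂) (hvu : v₁ ≠ u₂) (hvv : v₁ ≠ v₂)
    (h12 : ¬ (chainGraph E r n).Adj u₁ u₂) (h13 : ¬ (chainGraph E r n).Adj u₁ v₂)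
    (h14 : ¬ (chainGraph E r n).Adj v₁ u₂) (h15 : ¬ (chainGraph E r n).Adj v₁ v₂) :
    v₁ < u₂ := by
  obtain ⟨q₁, hq₁, hi₁, hd₁, ht₁⟩ := triRel_of_chainGraph_adj hE hv1 h1
  obtain ⟨q₂, hq₂, hi₂, hd₂, ht₂⟩ := triRel_of_chainGraph_adj hE hv2 h2
  have hE₁ := hE q₁ hq₁
  have hE₂ := hE q₂ hq₂
  by_contra! hle
  have hlt : u₂ < v₁ := hle.lt_of_ne hvu.symm
  have h41 : ¬ (chainGraph E r n).Adj u₂ v₁ := mt SimpleGraph.Adj.symm h14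
  have gap₁ : u₂ + q₁.1 < u₁ + q₁.2 := by
    have := lt_or_lt_or_lt_of_not_chainGraph_adj hq₁ hu.ne h12
    omega
  have gap₂ : v₁ + q₁.1 < u₂ + q₁.2 := by
    have := lt_or_lt_or_lt_of_not_chainGraph_adj hq₁ hlt.ne h41
    omega
  have left : u₁ < q₂.1 := by
    have := lt_or_lt_or_lt_of_not_chainGraph_adj hq₂ (hu.trans hv2).ne h13
    omega
  rcases hvv.lt_or_gt with hcross | hnested
  · have top : n + q₁.2 < v₂ + r := by
      have := lt_or_lt_or_lt_of_not_chainGraph_adj hq₁ (hu.trans hv2).ne h13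
      omega
    have gap₃ : v₂ + q₂.1 < v₁ + q₂.2 := by
      have := lt_or_lt_or_lt_of_not_chainGraph_adj hq₂ hcross.ne h15
      omega
    omega
  · have top : n + q₂.2 < v₁ + r := by
      have := lt_or_lt_or_lt_of_not_chainGraph_adj hq₂ hlt.ne h41
      omega
    omega

end ChainGraph

/-- For `n ≥ 3r`, if edges `(u₁,v₁)` and `(u₂,v₂)` of `G_n` form an induced matching,
then the intervals `[u₁,v₁]` and `[u₂,v₂]` are disjoint. -/
theorem induced_matching_disjoint_intervals (E : Set (ℕ × ℕ)) (r n : ℕ)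
    (hE : goodEdges E r) (hn : 3 * r ≤ n) (u₁ v₁ u₂ v₂ : ℕ)
    (h1 : (chainGraph E r n).Adj u₁ v₁) (h2 : (chainGraph E r n).Adj u₂ v₂)
    (hv1 : u₁ < v₁) (hv2 : u₂ < v₂)
    (hdisj : ({u₁, v₁} : Finset ℕ) ∩ ({u₂, v₂} : Finset ℕ) = ∅)
    (h12 : ¬ (chainGraph E r n).Adj u₁ u₂) (h13 : ¬ (chainGraph E r n).Adj u₁ v₂)
    (h14 : ¬ (chainGraph E r n).Adj v₁ u₂) (h15 : ¬ (chainGraph E r n).Adj v₁ v₂) :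
    Disjoint (Set.Icc u₁ v₁) (Set.Icc u₂ v₂) := by
  obtain ⟨⟨huu, hvu₁⟩, hvu₂, hvv⟩ : (u₂ ≠ u₁ ∧ u₂ ≠ v₁) ∧ v₂ ≠ u₁ ∧ v₂ ≠ v₁ := by
    simpa using Finset.disjoint_iff_inter_eq_empty.mpr hdisj
  rcases huu.symm.lt_or_gt with hu | hu
  · exact Set.Icc_disjoint_Icc_of_lt
      (lt_of_induced_matching_of_lt hE hn h1 h2 hv1 hv2 hu hvu₁.symm hvv.symm h12 h13 h14 h15)
  · refine (Set.Icc_disjoint_Icc_of_lt ?_).symm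
    exact lt_of_induced_matching_of_lt hE hn h2 h1 hv2 hv1 hu hvu₂ hvv
      (mt SimpleGraph.Adj.symm h12) (mt SimpleGraph.Adj.symm h14)
      (mt SimpleGraph.Adj.symm h13) (mt SimpleGraph.Adj.symm h15)
end

section
/- Let (G_n) be the chain of graphs as above with stability index r. Then for all n ≥ 3r, the graph G_n contains no induced cycle C_m with m ≥ 6. -/
namespace NoLongCycles

variable {E : Set (ℕ × ℕ)} {r n : ℕ}

lemma tri_lt (hE : goodEdges E r) {k l : ℕ} (h : triRel E r n k l) : k < l := by
  obtain ⟨⟨i, j⟩, hmem, h1, h2, h3⟩ := h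
  obtain ⟨g1, g2, g3⟩ := hE (i, j) hmem
  have g1' : 1 ≤ i := g1
  have g2' : i < j := g2
  have h1' : i ≤ k := h1
  have h2' : k + j ≤ l + i := h2
  omega

lemma adj_of_tri (hE : goodEdges E r) {k l : ℕ} (h : triRel E r n k l) :
    (chainGraph E r n).Adj k l := by
  have hlt := tri_lt hE h
  exact ⟨hlt.ne, Or.inl h⟩

lemma tri_of_adj (hE : goodEdges E r) {k l : ℕ} (h : (chainGraph E r n).Adj k l)
    (hkl : k < l) : triRel E r n k l := by
  obtain ⟨-, h | h⟩ := h
  · exact h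
  · exact absurd (tri_lt hE h) (by omega)

/-- The cross lemma: two overlapping edges admit a cross edge. -/
lemma cross (hE : goodEdges E r) (hn : 3 * r ≤ n) {a b c d : ℕ}
    (hab : triRel E r n a b) (hcd : triRel E r n c d) (hac : a ≤ c) (hcb : c ≤ b) :
    triRel E r n a c ∨ triRel E r n a d ∨ triRel E r n c b ∨ triRel E r n b d := by
  obtain ⟨⟨i, j⟩, hij, ha1, ha2, ha3⟩ := hab
  obtain ⟨⟨p, q⟩, hpq, hc1, hc2, hc3⟩ := hcd
  obtain ⟨gi1, gi2, gi3⟩ := hE (i, j) hij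
  obtain ⟨gp1, gp2, gp3⟩ := hE (p, q) hpq
  have gi1' : 1 ≤ i := gi1
  have gi2' : i < j := gi2
  have gi3' : j ≤ r := gi3
  have gp1' : 1 ≤ p := gp1
  have gp2' : p < q := gp2
  have gp3' : q ≤ r := gp3
  have ha1' : i ≤ a := ha1
  have ha2' : a + j ≤ b + i := ha2
  have ha3' : b + r ≤ n + j := ha3
  have hc1' : p ≤ c := hc1
  have hc2' : c + q ≤ d + p := hc2
  have hc3' : d + r ≤ n + q := hc3
  by_cases hA : p ≤ a
  · exact Or.inr (Or.inl ⟨(p, q), hpq, show p ≤ a by omega,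
      show a + q ≤ d + p by omega, show d + r ≤ n + q by omega⟩)
  by_cases hB1 : a + j ≤ c + i
  · exact Or.inl ⟨(i, j), hij, show i ≤ a by omega,
      show a + j ≤ c + i by omega, show c + r ≤ n + j by omega⟩
  by_cases hB2a : c + j ≤ b + i
  · exact Or.inr (Or.inr (Or.inl ⟨(i, j), hij, show i ≤ c by omega,
      show c + j ≤ b + i by omega, show b + r ≤ n + j by omega⟩))
  by_cases hB2bi : c + q ≤ b + p
  · exact Or.inr (Or.inr (Or.inl ⟨(p, q), hpq, show p ≤ c by omega,
      show c + q ≤ b + p by omega, show b + r ≤ n + q by omega⟩))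
  by_cases hB2bii : b + q ≤ d + p
  · exact Or.inr (Or.inr (Or.inr ⟨(p, q), hpq, show p ≤ b by omega,
      show b + q ≤ d + p by omega, show d + r ≤ n + q by omega⟩))
  · exact Or.inr (Or.inl ⟨(i, j), hij, show i ≤ a by omega,
      show a + j ≤ d + i by omega, show d + r ≤ n + j by omega⟩)

/-- Sorted form of the disjoint-intervals lemma. -/
lemma disj_sorted (hE : goodEdges E r) (hn : 3 * r ≤ n) {a b c d : ℕ}
    (hab : triRel E r n a b) (hcd : triRel E r n c d)
    (nac : ¬(chainGraph E r n).Adj a c) (nad : ¬(chainGraph E r n).Adj a d)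
    (nbc : ¬(chainGraph E r n).Adj b c) (nbd : ¬(chainGraph E r n).Adj b d) :
    b < c ∨ d < a := by
  rcases le_total a c with h | h
  · left
    by_contra hcb
    rcases cross hE hn hab hcd h (by omega) with t | t | t | t
    · exact nac (adj_of_tri hE t)
    · exact nad (adj_of_tri hE t)
    · exact nbc ((adj_of_tri hE t).symm)
    · exact nbd (adj_of_tri hE t)
  · right
    by_contra had
    rcases cross hE hn hcd hab h (by omega) with t | t | t | t
    · exact nac ((adj_of_tri hE t).symm)
    · exact nbc ((adj_of_tri hE t).symm)
    · exact nad (adj_of_tri hE t)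
    · exact nbd ((adj_of_tri hE t).symm)

/-- Two edges of `G_n` forming an induced matching occupy disjoint intervals. -/
lemma disj (hE : goodEdges E r) (hn : 3 * r ≤ n) {x1 x2 x3 x4 : ℕ}
    (h1 : (chainGraph E r n).Adj x1 x2) (h2 : (chainGraph E r n).Adj x3 x4)
    (n13 : ¬(chainGraph E r n).Adj x1 x3) (n14 : ¬(chainGraph E r n).Adj x1 x4)
    (n23 : ¬(chainGraph E r n).Adj x2 x3) (n24 : ¬(chainGraph E r n).Adj x2 x4) :
    (x1 < x3 ∧ x1 < x4 ∧ x2 < x3 ∧ x2 < x4) ∨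
      (x3 < x1 ∧ x3 < x2 ∧ x4 < x1 ∧ x4 < x2) := by
  have e1 : triRel E r n x1 x2 ∨ triRel E r n x2 x1 := h1.2
  have e2 : triRel E r n x3 x4 ∨ triRel E r n x4 x3 := h2.2
  rcases e1 with e1 | e1 <;> rcases e2 with e2 | e2
  · have o1 := tri_lt hE e1; have o2 := tri_lt hE e2
    rcases disj_sorted hE hn e1 e2 n13 n14 n23 n24 with h | h
    · left; omega
    · right; omega
  · have o1 := tri_lt hE e1; have o2 := tri_lt hE e2
    rcases disj_sorted hE hn e1 e2 n14 n13 n24 n23 with h | h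
    · left; omega
    · right; omega
  · have o1 := tri_lt hE e1; have o2 := tri_lt hE e2
    rcases disj_sorted hE hn e1 e2 n23 n24 n13 n14 with h | h
    · left; omega
    · right; omega
  · have o1 := tri_lt hE e1; have o2 := tri_lt hE e2
    rcases disj_sorted hE hn e1 e2 n24 n23 n14 n13 with h | h
    · left; omega
    · right; omega

/-- The key configuration lemma: impossible local picture around the minimal
vertex `a` of an induced cycle. -/
lemma key (hE : goodEdges E r) (hn : 3 * r ≤ n) {a y z u v w : ℕ}
    (hau : a ≤ u) (hyz : y < z)
    (h1 : (chainGraph E r n).Adj u v) (h2 : (chainGraph E r n).Adj a z)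
    (h3 : (chainGraph E r n).Adj y u) (h4 : (chainGraph E r n).Adj w z)
    (n1 : ¬(chainGraph E r n).Adj u a) (n2 : ¬(chainGraph E r n).Adj u z)
    (n3 : ¬(chainGraph E r n).Adj v a) (n4 : ¬(chainGraph E r n).Adj v z)
    (n5 : ¬(chainGraph E r n).Adj y w) (n6 : ¬(chainGraph E r n).Adj y z)
    (n7 : ¬(chainGraph E r n).Adj u w) : False := by
  have d1 := disj hE hn h1 h2 n1 n2 n3 n4
  have d2 := disj hE hn h3 h4 n5 n6 n7 n2
  omega

lemma resid {m x y : ℕ} (hxy : x < y) (h : y - x < m) : x % m ≠ y % m := by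
  intro h'
  have hd : m ∣ y - x := (Nat.modEq_iff_dvd' hxy.le).1 h'
  have := Nat.le_of_dvd (by omega) hd
  omega

end NoLongCycles

open NoLongCycles Fin.NatCast Fin.CommRing in
/-- For `n ≥ 3r`, the graph `G_n` contains no induced cycle `C_m` with `m ≥ 6`. -/
theorem no_long_induced_cycles (E : Set (ℕ × ℕ)) (r n : ℕ) (hE : goodEdges E r)
    (hn : 3 * r ≤ n) (m : ℕ) (hm : 6 ≤ m) :
    IsEmpty (SimpleGraph.cycleGraph m ↪g chainGraph E r n) := by
  obtain ⟨M, rfl⟩ : ∃ M, m = M + 1 := ⟨m - 1, by omega⟩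
  have hM : 5 ≤ M := by omega
  refine ⟨fun f => ?_⟩
  -- basic facts about `Fin (M+1)`
  have hval_one : ((1 : Fin (M + 1)) : ℕ) = 1 := by
    rw [Fin.val_one']
    exact Nat.one_mod_eq_one.mpr (by omega)
  have hcast_val : ∀ k : ℕ, ((k : Fin (M + 1)) : ℕ) = k % (M + 1) := fun k => by
    rw [Fin.val_natCast]
  -- the minimal vertex
  obtain ⟨t, -, ht⟩ := Finset.exists_min_image Finset.univ (fun k => f k)
    ⟨⟨0, by omega⟩, Finset.mem_univ _⟩
  -- indices around the cycle
  set x : ℕ → ℕ := fun k => f (t + (k : Fin (M + 1))) with hx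
  have hmin : ∀ k : ℕ, x 0 ≤ x k := by
    intro k
    have h0 : x 0 = f t := by simp [hx]
    rw [h0]
    exact ht _ (Finset.mem_univ _)
  -- cycle adjacency along consecutive indices
  have Aadj : ∀ k : ℕ, (SimpleGraph.cycleGraph (M + 1)).Adj (t + (k : Fin (M + 1)))
      (t + ((k + 1 : ℕ) : Fin (M + 1))) := by
    intro k
    rw [SimpleGraph.cycleGraph_adj']
    right
    have hsub : (t + ((k + 1 : ℕ) : Fin (M + 1))) - (t + (k : Fin (M + 1))) = 1 := by
      push_cast
      ring
    rw [hsub, hval_one]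
  -- non-adjacency for cyclic distance ≥ 2
  have NA : ∀ k l : ℕ, k + 2 ≤ l → l + 2 ≤ k + (M + 1) →
      ¬(SimpleGraph.cycleGraph (M + 1)).Adj (t + (k : Fin (M + 1)))
        (t + (l : Fin (M + 1))) := by
    intro k l hkl hlk hadj
    rw [SimpleGraph.cycleGraph_adj'] at hadj
    have hsub1 : (t + (k : Fin (M + 1))) - (t + (l : Fin (M + 1)))
        = (k : Fin (M + 1)) - (l : Fin (M + 1)) := by ring
    have hsub2 : (t + (l : Fin (M + 1))) - (t + (k : Fin (M + 1)))
        = (l : Fin (M + 1)) - (k : Fin (M + 1)) := by ring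
    rcases hadj with h | h
    · rw [hsub1] at h
      have h1 : (k : Fin (M + 1)) - (l : Fin (M + 1)) = 1 := by
        apply Fin.ext; rw [hval_one]; exact h
      have h2 : (k : Fin (M + 1)) = ((l + 1 : ℕ) : Fin (M + 1)) := by
        push_cast
        rw [sub_eq_iff_eq_add] at h1
        rw [h1]; ring
      have h3 : k % (M + 1) = (l + 1) % (M + 1) := by
        rw [← hcast_val, ← hcast_val, h2]
      exact resid (show k < l + 1 by omega) (by omega) h3
    · rw [hsub2] at h
      have h1 : (l : Fin (M + 1)) - (k : Fin (M + 1)) = 1 := by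
        apply Fin.ext; rw [hval_one]; exact h
      have h2 : (l : Fin (M + 1)) = ((k + 1 : ℕ) : Fin (M + 1)) := by
        push_cast
        rw [sub_eq_iff_eq_add] at h1
        rw [h1]; ring
      have h3 : (k + 1) % (M + 1) = l % (M + 1) := by
        rw [← hcast_val, ← hcast_val, h2]
      exact resid (show k + 1 < l by omega) (by omega) h3
  -- transfer to the chain graph
  have A : ∀ k : ℕ, (chainGraph E r n).Adj (x k) (x (k + 1)) := fun k =>
    f.map_adj_iff.2 (Aadj k)
  have N : ∀ k l : ℕ, k + 2 ≤ l → l + 2 ≤ k + (M + 1) →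
      ¬(chainGraph E r n).Adj (x k) (x l) := by
    intro k l h1 h2 hadj
    exact NA k l h1 h2 (f.map_adj_iff.1 hadj)
  -- wrap-around: x (M+1) = x 0
  have hwrap : x (M + 1) = x 0 := by
    have : ((M + 1 : ℕ) : Fin (M + 1)) = ((0 : ℕ) : Fin (M + 1)) := by
      apply Fin.ext
      rw [hcast_val, hcast_val]
      simp
    simp only [hx, this]
  -- the three cases on x 1 vs x M
  rcases lt_trichotomy (x 1) (x M) with hlt | heq | hlt
  · -- direction d = +1 : a = x 0, y = x 1, z = x M, u = x 2, v = x 3, w = x (M-1)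
    have hAaz : (chainGraph E r n).Adj (x 0) (x M) := by
      have := A M; rw [hwrap] at this; exact this.symm
    have hA3 : (chainGraph E r n).Adj (x (M - 1)) (x M) := by
      have := A (M - 1); rwa [show M - 1 + 1 = M by omega] at this
    exact key hE hn (hmin 2) hlt (A 2) hAaz (A 1) hA3
      ((N 0 2 (by omega) (by omega)) ∘ SimpleGraph.Adj.symm)
      (N 2 M (by omega) (by omega))
      ((N 0 3 (by omega) (by omega)) ∘ SimpleGraph.Adj.symm)
      (N 3 M (by omega) (by omega))
      (N 1 (M - 1) (by omega) (by omega))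
      (N 1 M (by omega) (by omega))
      (N 2 (M - 1) (by omega) (by omega))
  · -- impossible: x 1 = x M forces idx 1 = idx M
    have hinj : t + ((1 : ℕ) : Fin (M + 1)) = t + ((M : ℕ) : Fin (M + 1)) :=
      f.injective heq
    have h1M : ((1 : ℕ) : Fin (M + 1)) = ((M : ℕ) : Fin (M + 1)) := by
      exact add_left_cancel hinj
    have : (1 : ℕ) % (M + 1) = M % (M + 1) := by
      rw [← hcast_val, ← hcast_val, h1M]
    exact resid (show 1 < M by omega) (by omega) this
  · -- direction d = -1 : a = x 0, y = x M, z = x 1, u = x (M-1), v = x (M-2), w = x 2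
    have hAya : (chainGraph E r n).Adj (x M) (x 0) := by
      have := A M; rwa [hwrap] at this
    have hA2 : (chainGraph E r n).Adj (x M) (x (M - 1)) := by
      have := A (M - 1); rw [show M - 1 + 1 = M by omega] at this; exact this.symm
    have hA3 : (chainGraph E r n).Adj (x (M - 1)) (x (M - 2)) := by
      have := A (M - 2); rw [show M - 2 + 1 = M - 1 by omega] at this; exact this.symm
    exact key hE hn (hmin (M - 1)) hlt hA3 (A 0) hA2 ((A 1).symm)
      ((N 0 (M - 1) (by omega) (by omega)) ∘ SimpleGraph.Adj.symm)
      ((N 1 (M - 1) (by omega) (by omega)) ∘ SimpleGraph.Adj.symm)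
      ((N 0 (M - 2) (by omega) (by omega)) ∘ SimpleGraph.Adj.symm)
      ((N 1 (M - 2) (by omega) (by omega)) ∘ SimpleGraph.Adj.symm)
      (N 2 M (by omega) (by omega) ∘ SimpleGraph.Adj.symm)
      ((N 1 M (by omega) (by omega)) ∘ SimpleGraph.Adj.symm)
      ((N 2 (M - 1) (by omega) (by omega)) ∘ SimpleGraph.Adj.symm)
end

section
/- Let (G_n) be the chain of graphs as above with stability index r, where G_r has an edge of the form (b, r) and B = max{i : (i,r) ∈ E(G_r)}, b = min{i : (i,r) ∈ E(G_r)}, and assume max{j : (i,j) ∈ E(G_r)} = r. Then for all n ≥ 2r + 1, the neighborhood of the vertex n in G_n is N(n) = {b, b+1, ..., n - r + B}, and hence the vertex set of G_n \ N[n] is {1,...,b-1} ∪ {n-r+B+1, ..., n-1}. -/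
/-!
The edges of `G_n` at `n` come only from the edges `(i, r)` of `G_r`, and the edge `(i, r)`
contributes the neighbours `i, …, n - r + i`. For `n ≥ 2r + 1` these intervals are so long
that the two extreme ones, for `i = b` and `i = B`, already overlap, so their union is the
whole interval `b, …, n - r + B`.
-/

namespace goodEdges

variable {E : Set (ℕ × ℕ)} {r : ℕ}

theorem triRel_lt (hE : goodEdges E r) {n k l : ℕ} (h : triRel E r n k l) : k < l := by
  obtain ⟨q, hq, -, hkl, -⟩ := h
  have := (hE q hq).2.1
  omega

theorem triRel_le (hE : goodEdges E r) {n k l : ℕ} (h : triRel E r n k l) : l ≤ n := by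
  obtain ⟨q, hq, -, -, hl⟩ := h
  have := (hE q hq).2.2
  omega

theorem triRel_right_iff (hE : goodEdges E r) {n m : ℕ} (hrn : r ≤ n) :
    triRel E r n m n ↔ ∃ i, (i, r) ∈ E ∧ m ∈ Set.Icc i (n - r + i) := by
  constructor
  · rintro ⟨⟨i, j⟩, hq, him, hmn, hjr⟩
    obtain rfl : j = r := le_antisymm (hE _ hq).2.2 (by simpa using hjr)
    exact ⟨i, hq, him, by simp only at hmn; omega⟩
  · rintro ⟨i, hq, him, hmn⟩
    exact ⟨(i, r), hq, him, by simp only; omega, le_refl _⟩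

theorem neighborSet_chainGraph_eq_biUnion (hE : goodEdges E r) {n : ℕ} (hrn : r ≤ n) :
    (chainGraph E r n).neighborSet n = ⋃ i ∈ {i | (i, r) ∈ E}, Set.Icc i (n - r + i) := by
  ext m
  simp only [SimpleGraph.mem_neighborSet, chainGraph, SimpleGraph.fromRel_adj,
    Set.mem_iUnion, Set.mem_ofPred_eq, exists_prop]
  constructor
  · rintro ⟨-, h | h⟩
    · exact absurd (hE.triRel_le h) (hE.triRel_lt h).not_ge
    · exact (hE.triRel_right_iff hrn).1 h
  · intro h
    have h' := (hE.triRel_right_iff hrn).2 h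
    exact ⟨(hE.triRel_lt h').ne.symm, Or.inr h'⟩

end goodEdges

theorem biUnion_Icc_add_eq_Icc {S : Set ℕ} {b B d : ℕ} (hb : b ∈ S) (hB : B ∈ S)
    (hbmin : ∀ i ∈ S, b ≤ i) (hBmax : ∀ i ∈ S, i ≤ B) (hgap : B ≤ d + b + 1) :
    ⋃ i ∈ S, Set.Icc i (d + i) = Set.Icc b (d + B) := by
  ext m
  simp only [Set.mem_iUnion, Set.mem_Icc, exists_prop]
  constructor
  · rintro ⟨i, hi, him, hmi⟩
    have := hbmin i hi
    have := hBmax i hi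
    omega
  · rintro ⟨hbm, hmB⟩
    by_cases hm : m ≤ d + b
    · exact ⟨b, hb, hbm, hm⟩
    · exact ⟨B, hB, by omega, hmB⟩

/-- Suppose `G_r` has edges ending at `r`, with `b` resp. `B` the least resp. greatest
first coordinate of such an edge. Then for `n ≥ 2r + 1`, the neighborhood of the
vertex `n` in `G_n` is `{b, b+1, …, n-r+B}`, and hence the vertex set of
`G_n \ N[n]` is `{1,…,b-1} ∪ {n-r+B+1,…,n-1}`. -/
theorem neighborhood_of_last_vertex (E : Set (ℕ × ℕ)) (r n b B : ℕ) (hE : goodEdges E r)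
    (hb : (b, r) ∈ E) (hB : (B, r) ∈ E)
    (hbmin : ∀ i, (i, r) ∈ E → b ≤ i) (hBmax : ∀ i, (i, r) ∈ E → i ≤ B)
    (hn : 2 * r + 1 ≤ n) :
    (chainGraph E r n).neighborSet n = Set.Icc b (n - r + B) ∧
    Set.Icc 1 n \ insert n ((chainGraph E r n).neighborSet n) =
      Set.Icc 1 (b - 1) ∪ Set.Icc (n - r + B + 1) (n - 1) := by
  have hb1 : 1 ≤ b := (hE _ hb).1
  have hBr : B < r := (hE _ hB).2.1
  have hbB : b ≤ B := hBmax b hb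
  have hN : (chainGraph E r n).neighborSet n = Set.Icc b (n - r + B) := by
    rw [hE.neighborSet_chainGraph_eq_biUnion (by omega)]
    exact biUnion_Icc_add_eq_Icc hb hB hbmin hBmax (by omega)
  refine ⟨hN, ?_⟩
  ext m
  simp only [hN, Set.mem_sdiff, Set.mem_Icc, Set.mem_insert_iff, Set.mem_union]
  omega
end

section
/- Assume G_r is a graph on {1,...,r} containing the edge (1, r) (i.e., x_1 x_r ∈ I_r), and let m = min{j - i : (i,j) ∈ E(G_r)}. Then for all n ≥ 3r, every maximal independent set of G_n has size at least m. -/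
theorem SimpleGraph.exists_adj_of_maximal_indep {α : Type*} [DecidableEq α] {G : SimpleGraph α}
    {S : Set α} {U : Finset α} (hind : ∀ u ∈ U, ∀ v ∈ U, ¬ G.Adj u v)
    (hmax : ∀ v ∈ S, v ∉ U → ¬ (∀ a ∈ insert v U, ∀ b ∈ insert v U, ¬ G.Adj a b))
    {v : α} (hv : v ∈ S) (hvU : v ∉ U) : ∃ u ∈ U, G.Adj u v := by
  by_contra! hfree
  refine hmax v hv hvU fun a ha b hb hab => ?_
  rcases Finset.mem_insert.1 ha with rfl | haU <;> rcases Finset.mem_insert.1 hb with rfl | hbU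
  · exact hab.ne rfl
  · exact hfree b hbU hab.symm
  · exact hfree a haU hab
  · exact hind a haU b hbU hab

namespace triRel

variable {E : Set (ℕ × ℕ)} {r n k l : ℕ}

theorem add_le {m : ℕ} (hm : ∀ q ∈ E, q.1 + m ≤ q.2) (h : triRel E r n k l) : k + m ≤ l := by
  obtain ⟨q, hq, -, hkl, -⟩ := h
  have := hm q hq
  omega

theorem lt_s15 (hE : goodEdges E r) (h : triRel E r n k l) : k < l := by
  obtain ⟨q, hq, -, hkl, -⟩ := h
  have := hE q hq
  omega

theorem mono_right (hE : goodEdges E r) (h : triRel E r n k l) {l' : ℕ} (hl : l ≤ l')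
    (hl' : l' + r ≤ n + 1) : triRel E r n k l' := by
  obtain ⟨q, hq, hk, hkl, -⟩ := h
  have := hE q hq
  exact ⟨q, hq, hk, by omega, by omega⟩

theorem anti_left (hE : goodEdges E r) (h : triRel E r n k l) {k' : ℕ} (hk : k' ≤ k)
    (hk' : r ≤ k') : triRel E r n k' l := by
  obtain ⟨q, hq, -, hkl, hl⟩ := h
  have := hE q hq
  exact ⟨q, hq, by omega, by omega, hl⟩

end triRel

theorem triRel_of_add_le {E : Set (ℕ × ℕ)} {r n k l : ℕ} (h1r : (1, r) ∈ E) (hk : 1 ≤ k)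
    (hkl : k + r ≤ l + 1) (hl : l ≤ n) : triRel E r n k l :=
  ⟨(1, r), h1r, hk, by omega, by omega⟩

theorem chainGraph_adj_iff {E : Set (ℕ × ℕ)} {r n u v : ℕ} (hE : goodEdges E r) :
    (chainGraph E r n).Adj u v ↔ triRel E r n u v ∨ triRel E r n v u := by
  rw [chainGraph, SimpleGraph.fromRel_adj, and_iff_right_iff_imp]
  rintro (h | h)
  · exact (h.lt_s15 hE).ne
  · exact (h.lt_s15 hE).ne'

/-! Below, `hind` and `hdom` say that `U ⊆ [1, n]` is a maximal independent set of `G_n`. -/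

namespace MaximalIndep

variable {E : Set (ℕ × ℕ)} {r m n : ℕ} {U : Finset ℕ}

theorem max'_add_one_lt_min'_add (h1r : (1, r) ∈ E) (hUsub : ↑U ⊆ Set.Icc 1 n)
    (hind : ∀ u ∈ U, ∀ v ∈ U, ¬ triRel E r n u v) (hU : U.Nonempty) :
    U.max' hU + 1 < U.min' hU + r := by
  by_contra! h
  exact hind _ (U.min'_mem hU) _ (U.max'_mem hU)
    (triRel_of_add_le h1r (hUsub (U.min'_mem hU)).1 h (hUsub (U.max'_mem hU)).2)

theorem exists_far_of_notMem (hm : ∀ q ∈ E, q.1 + m ≤ q.2)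
    (hdom : ∀ v ∈ Set.Icc 1 n, v ∉ U → ∃ u ∈ U, triRel E r n u v ∨ triRel E r n v u)
    {v : ℕ} (hv : v ∈ Set.Icc 1 n) (hvU : v ∉ U) : ∃ u ∈ U, u + m ≤ v ∨ v + m ≤ u := by
  obtain ⟨u, hu, h | h⟩ := hdom v hv hvU
  · exact ⟨u, hu, Or.inl (h.add_le hm)⟩
  · exact ⟨u, hu, Or.inr (h.add_le hm)⟩

theorem min'_add_le_max'_add_one (h1r : (1, r) ∈ E) (hm : ∀ q ∈ E, q.1 + m ≤ q.2)
    (hrn : r ≤ n) (hUsub : ↑U ⊆ Set.Icc 1 n) (hind : ∀ u ∈ U, ∀ v ∈ U, ¬ triRel E r n u v)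
    (hdom : ∀ v ∈ Set.Icc 1 n, v ∉ U → ∃ u ∈ U, triRel E r n u v ∨ triRel E r n v u)
    (hU : U.Nonempty) : U.min' hU + m ≤ U.max' hU + 1 := by
  by_contra! hnear
  have hspan := max'_add_one_lt_min'_add h1r hUsub hind hU
  have hbn := (hUsub (U.max'_mem hU)).2
  have hab := U.min'_le _ (U.max'_mem hU)
  obtain ⟨v, hv, hvU, hva, hvb⟩ : ∃ v ∈ Set.Icc 1 n, v ∉ U ∧ v < U.min' hU + m ∧
      U.max' hU < v + m := by
    by_cases hb : U.max' hU < n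
    · exact ⟨U.max' hU + 1, ⟨by omega, hb⟩, fun hmem => absurd (U.le_max' _ hmem) (by omega),
        by omega, by omega⟩
    · exact ⟨U.min' hU - 1, ⟨by omega, by omega⟩, fun hmem => absurd (U.min'_le _ hmem) (by omega),
        by omega, by omega⟩
  obtain ⟨u, hu, huv⟩ := exists_far_of_notMem hm hdom hv hvU
  have := U.min'_le u hu
  have := U.le_max' u hu
  omega

theorem Ioc_sub_max'_subset (hE : goodEdges E r) (hm : ∀ q ∈ E, q.1 + m ≤ q.2)
    (hUsub : ↑U ⊆ Set.Icc 1 n) (hind : ∀ u ∈ U, ∀ v ∈ U, ¬ triRel E r n u v)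
    (hdom : ∀ v ∈ Set.Icc 1 n, v ∉ U → ∃ u ∈ U, triRel E r n u v ∨ triRel E r n v u)
    (hU : U.Nonempty) (hbr : U.max' hU + r ≤ n + 1) :
    Finset.Ioc (U.max' hU - m) (U.max' hU) ⊆ U := by
  intro v hv
  rw [Finset.mem_Ioc] at hv
  have hbn := (hUsub (U.max'_mem hU)).2
  by_contra hvU
  obtain ⟨u, hu, h | h⟩ := hdom v ⟨by omega, by omega⟩ hvU
  · exact hind u hu _ (U.max'_mem hU) (h.mono_right hE hv.2 hbr)
  · have := h.add_le hm
    have := U.le_max' u hu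
    omega

theorem Ico_min'_subset (hE : goodEdges E r) (hm : ∀ q ∈ E, q.1 + m ≤ q.2)
    (hUsub : ↑U ⊆ Set.Icc 1 n) (hind : ∀ u ∈ U, ∀ v ∈ U, ¬ triRel E r n u v)
    (hdom : ∀ v ∈ Set.Icc 1 n, v ∉ U → ∃ u ∈ U, triRel E r n u v ∨ triRel E r n v u)
    (hU : U.Nonempty) (hra : r ≤ U.min' hU) (hab : U.min' hU + m ≤ U.max' hU + 1) :
    Finset.Ico (U.min' hU) (U.min' hU + m) ⊆ U := by
  intro v hv
  rw [Finset.mem_Ico] at hv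
  have ha := (hUsub (U.min'_mem hU)).1
  have hbn := (hUsub (U.max'_mem hU)).2
  by_contra hvU
  obtain ⟨u, hu, h | h⟩ := hdom v ⟨by omega, by omega⟩ hvU
  · have := h.add_le hm
    have := U.min'_le u hu
    omega
  · exact hind _ (U.min'_mem hU) u hu (h.anti_left hE hv.1 hra)

end MaximalIndep

open MaximalIndep in
theorem maximal_independent_set_size_general (E : Set (ℕ × ℕ)) (r m n : ℕ) (hE : goodEdges E r)
    (h1r : (1, r) ∈ E) (hm : ∀ q ∈ E, q.1 + m ≤ q.2)
    (hn : 3 * r ≤ n) (U : Finset ℕ) (hUsub : ↑U ⊆ Set.Icc 1 n)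
    (hind : ∀ u ∈ U, ∀ v ∈ U, ¬ (chainGraph E r n).Adj u v)
    (hmax : ∀ v ∈ Set.Icc 1 n, v ∉ U →
      ¬ (∀ a ∈ insert v U, ∀ b ∈ insert v U, ¬ (chainGraph E r n).Adj a b)) :
    m ≤ U.card := by
  have hr := (hE (1, r) h1r).2.1
  have hind' : ∀ u ∈ U, ∀ v ∈ U, ¬ triRel E r n u v := fun u hu v hv h =>
    hind u hu v hv ((chainGraph_adj_iff hE).2 (Or.inl h))
  have hdom : ∀ v ∈ Set.Icc 1 n, v ∉ U → ∃ u ∈ U, triRel E r n u v ∨ triRel E r n v u :=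
    fun v hv hvU => by
      obtain ⟨u, hu, huv⟩ := SimpleGraph.exists_adj_of_maximal_indep hind hmax hv hvU
      exact ⟨u, hu, (chainGraph_adj_iff hE).1 huv⟩
  have hU : U.Nonempty := by
    by_cases h1 : 1 ∈ U
    · exact ⟨1, h1⟩
    · obtain ⟨u, hu, -⟩ := hdom 1 ⟨le_rfl, by omega⟩ h1
      exact ⟨u, hu⟩
  have hspan := max'_add_one_lt_min'_add h1r hUsub hind' hU
  have hab := min'_add_le_max'_add_one h1r hm (by omega) hUsub hind' hdom hU
  have ha := (hUsub (U.min'_mem hU)).1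
  by_cases hbr : U.max' hU + r ≤ n + 1
  · calc m = (Finset.Ioc (U.max' hU - m) (U.max' hU)).card := by rw [Nat.card_Ioc]; omega
      _ ≤ U.card := Finset.card_le_card (Ioc_sub_max'_subset hE hm hUsub hind' hdom hU hbr)
  · calc m = (Finset.Ico (U.min' hU) (U.min' hU + m)).card := by rw [Nat.card_Ico]; omega
      _ ≤ U.card := Finset.card_le_card (Ico_min'_subset hE hm hUsub hind' hdom hU (by omega) hab)

/-- Assume `(1,r) ∈ E(G_r)` and let `m = min{j - i : (i,j) ∈ E(G_r)}`. Then for all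
`n ≥ 3r`, every maximal independent set of `G_n` (inside `{1,…,n}`) has size ≥ `m`. -/
theorem maximal_independent_set_size (E : Set (ℕ × ℕ)) (r m n : ℕ) (hE : goodEdges E r)
    (h1r : (1, r) ∈ E) (hm : ∀ q ∈ E, q.1 + m ≤ q.2) (hattain : ∃ q ∈ E, q.2 = q.1 + m)
    (hn : 3 * r ≤ n) (U : Finset ℕ) (hUsub : ↑U ⊆ Set.Icc 1 n)
    (hind : ∀ u ∈ U, ∀ v ∈ U, ¬ (chainGraph E r n).Adj u v)
    (hmax : ∀ v ∈ Set.Icc 1 n, v ∉ U →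
      ¬ (∀ a ∈ insert v U, ∀ b ∈ insert v U, ¬ (chainGraph E r n).Adj a b)) :
    m ≤ U.card :=
  maximal_independent_set_size_general E r m n hE h1r hm hn U hUsub hind hmax
end

section
/- Assume G_r contains the edge (1, r - 1) (i.e., j_q = r - 1 where j_q = max{j : (1,j) ∈ E(G_r)}), the maximal support index is r (some edge has endpoint r, with b, B the min and max first coordinates of such edges), and the sparsity index is ≥ 2. Then for all n ≥ 2r + 1, the complement of the induced subgraph G_n \ N[n] has exactly two connected components, namely the induced subgraphs on V_1 = {1, ..., b-1} and V_2 = {n-r+B+1, ..., n-1}; consequently the 0-th reduced homology of the independence complex IN(G_n \ N[n]) over a field k is isomorphic to k. -/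
/-- The augmentation map `∂₀ : C₀(Δ; k) → k` of the reduced simplicial chain complex,
sending each vertex of `Δ` to `1`. -/
noncomputable def augMap (k : Type) [Field k] (V : Type) (Δ : Set (Finset V)) :
    ({v : V // ({v} : Finset V) ∈ Δ} →₀ k) →ₗ[k] k :=
  Finsupp.linearCombination k (fun _ => (1 : k))

/-- The boundaries of the 1-faces of `Δ`: the image of `∂₁ : C₁(Δ; k) → C₀(Δ; k)`
is spanned by the differences `u - v` over edges `{u,v}` of `Δ`. -/
def edgeBoundaries (k : Type) [Field k] (V : Type) [DecidableEq V] (Δ : Set (Finset V)) :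
    Set ({v : V // ({v} : Finset V) ∈ Δ} →₀ k) :=
  {f | ∃ u v : {v : V // ({v} : Finset V) ∈ Δ}, ({u.1, v.1} : Finset V) ∈ Δ ∧
    f = Finsupp.single u 1 - Finsupp.single v 1}

/-- The 0-th reduced simplicial homology of `Δ` over the field `k`, presented as
`ker ∂₀ / im ∂₁`, realized as the kernel of the map induced by the augmentation `∂₀`
on `C₀/im ∂₁`. -/
noncomputable abbrev redH0 (k : Type) [Field k] (V : Type) [DecidableEq V]
    (Δ : Set (Finset V)) : Type :=
  LinearMap.ker ((Submodule.span k (edgeBoundaries k V Δ)).liftQ (augMap k V Δ) (by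
    rw [Submodule.span_le]
    rintro f ⟨u, v, -, rfl⟩
    simp [SetLike.mem_coe, LinearMap.mem_ker, map_sub, augMap,
      Finsupp.linearCombination_single]))

/-! The vertices of `G_n \ N[n]` are the two intervals `V₁` and `V₂`. Consecutive integers are
never adjacent in `G_n` (sparsity), so each interval is connected in the complement, while the
edge `(1, r-1)` spreads in `G_n` to an edge between any vertex of `V₁` and any vertex of `V₂`, so
no complement edge crosses. An independence complex has the complement graph as its 1-skeleton,
so its `H̃₀` is the kernel of the augmentation on a space spanned by the two component classes,
which are separated by the indicator functional of one component. -/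

section LinearAlgebra

variable {k M : Type*} [Field k] [AddCommGroup M] [Module k M]

theorem LinearMap.ker_eq_span_sub_of_span_pair_eq_top (A : M →ₗ[k] k) {e f : M}
    (hspan : Submodule.span k {e, f} = ⊤) (he : A e = 1) (hf : A f = 1) :
    LinearMap.ker A = k ∙ (e - f) := by
  refine le_antisymm (fun x hx => ?_) ?_
  · obtain ⟨a, c, rfl⟩ := Submodule.mem_span_pair.1 (hspan ▸ Submodule.mem_top : x ∈ _)
    have hc : c = -a := by
      rw [LinearMap.mem_ker, map_add, map_smul, map_smul, he, hf] at hx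
      simp only [smul_eq_mul, mul_one] at hx
      linear_combination hx
    exact Submodule.mem_span_singleton.2 ⟨a, by rw [hc]; module⟩
  · rw [Submodule.span_singleton_le_iff_mem, LinearMap.mem_ker, map_sub, he, hf, sub_self]

theorem LinearMap.nonempty_ker_equiv_of_span_pair_eq_top (A : M →ₗ[k] k) {e f : M}
    (hspan : Submodule.span k {e, f} = ⊤) (he : A e = 1) (hf : A f = 1) (hef : e ≠ f) :
    Nonempty (LinearMap.ker A ≃ₗ[k] k) :=
  ⟨(LinearEquiv.ofEq _ _ (A.ker_eq_span_sub_of_span_pair_eq_top hspan he hf)).trans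
    (LinearEquiv.toSpanNonzeroSingleton k M _ (sub_ne_zero.2 hef)).symm⟩

end LinearAlgebra

section ReducedHomology

variable (k : Type) [Field k] {V : Type} [DecidableEq V]

theorem nonempty_redH0_equiv_of_two_classes {Δ : Set (Finset V)}
    (u₀ v₀ : {v : V // ({v} : Finset V) ∈ Δ})
    (hcover : ∀ v, Finsupp.single v (1 : k) - Finsupp.single u₀ 1 ∈
        Submodule.span k (edgeBoundaries k V Δ) ∨
      Finsupp.single v (1 : k) - Finsupp.single v₀ 1 ∈ Submodule.span k (edgeBoundaries k V Δ))
    (hsep : Finsupp.single u₀ (1 : k) - Finsupp.single v₀ 1 ∉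
      Submodule.span k (edgeBoundaries k V Δ)) :
    Nonempty (redH0 k V Δ ≃ₗ[k] k) := by
  set N := Submodule.span k (edgeBoundaries k V Δ)
  have hclass : ∀ v, Submodule.Quotient.mk (p := N) (Finsupp.single v 1) ∈
      Submodule.span k {N.mkQ (Finsupp.single u₀ 1), N.mkQ (Finsupp.single v₀ 1)} := by
    intro v
    rcases hcover v with h | h <;>
    · rw [(Submodule.Quotient.eq N).2 h]
      exact Submodule.subset_span (by simp)
  refine LinearMap.nonempty_ker_equiv_of_span_pair_eq_top _ ?_ ?_ ?_
    (by rwa [Ne, Submodule.mkQ_apply, Submodule.mkQ_apply, Submodule.Quotient.eq] :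
      N.mkQ (Finsupp.single u₀ 1) ≠ N.mkQ (Finsupp.single v₀ 1))
  · refine Submodule.eq_top_iff'.2 fun y => ?_
    obtain ⟨x, rfl⟩ := N.mkQ_surjective y
    induction x using Finsupp.induction_linear with
    | zero => simp
    | add f g hf hg => rw [map_add]; exact add_mem hf hg
    | single v c =>
      rw [← mul_one c, ← smul_eq_mul, ← Finsupp.smul_single, map_smul]
      exact Submodule.smul_mem _ _ (hclass v)
  all_goals simp [augMap]

end ReducedHomology

section IndependenceComplex

variable {V : Type} (G : SimpleGraph V)

theorem singleton_mem_indepComplex (v : V) : ({v} : Finset V) ∈ indepComplex G := by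
  simp [indepComplex]

theorem pair_mem_indepComplex_iff [DecidableEq V] {u v : V} :
    ({u, v} : Finset V) ∈ indepComplex G ↔ ¬ G.Adj u v := by
  simp only [indepComplex, Set.mem_ofPred_eq, Finset.mem_insert, Finset.mem_singleton]
  refine ⟨fun h => h u (.inl rfl) v (.inr rfl), fun h => ?_⟩
  rintro _ (rfl | rfl) _ (rfl | rfl) hadj
  exacts [hadj.ne rfl, h hadj, h hadj.symm, hadj.ne rfl]

theorem nonempty_redH0_indepComplex_equiv (k : Type) [Field k] [DecidableEq V] (u₀ v₀ : V)
    (hcover : ∀ v, Gᶜ.Reachable v u₀ ∨ Gᶜ.Reachable v v₀) (hsep : ¬ Gᶜ.Reachable u₀ v₀) :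
    Nonempty (redH0 k V (indepComplex G) ≃ₗ[k] k) := by
  classical
  let ι (v : V) : {v : V // ({v} : Finset V) ∈ indepComplex G} :=
    ⟨v, singleton_mem_indepComplex G v⟩
  set N := Submodule.span k (edgeBoundaries k V (indepComplex G))
  have hreach {u v : V} (h : Gᶜ.Reachable u v) :
      Finsupp.single (ι u) (1 : k) - Finsupp.single (ι v) 1 ∈ N := by
    rw [SimpleGraph.reachable_iff_reflTransGen] at h
    induction h with
    | refl => simp
    | tail _ hadj ih =>
      rw [← sub_add_sub_cancel]
      exact add_mem ih (Submodule.subset_span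
        ⟨_, _, (pair_mem_indepComplex_iff G).2 ((G.compl_adj _ _).1 hadj).2, rfl⟩)
  let φ := Finsupp.linearCombination k fun w : {v : V // ({v} : Finset V) ∈ indepComplex G} =>
    if Gᶜ.Reachable w.1 u₀ then (1 : k) else 0
  have hφ : N ≤ LinearMap.ker φ := by
    refine Submodule.span_le.2 ?_
    rintro _ ⟨u, v, hface, rfl⟩
    have huv : Gᶜ.Reachable u.1 v.1 := by
      by_cases h : u.1 = v.1
      · rw [h]
      · exact ((G.compl_adj _ _).2 ⟨h, (pair_mem_indepComplex_iff G).1 hface⟩).reachable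
    have hsame : Gᶜ.Reachable u.1 u₀ ↔ Gᶜ.Reachable v.1 u₀ := ⟨huv.symm.trans, huv.trans⟩
    simp [φ, Finsupp.linearCombination_single, hsame]
  refine nonempty_redH0_equiv_of_two_classes k (ι u₀) (ι v₀)
    (fun w => (hcover w.1).imp hreach hreach) fun h => ?_
  have := hφ h
  simp [φ, Finsupp.linearCombination_single, ι, SimpleGraph.reachable_comm, hsep] at this

end IndependenceComplex

section IntervalGraphs

variable {H : SimpleGraph ℕ}

theorem reachable_compl_induce_of_Icc_subset (hsucc : ∀ m, ¬ H.Adj m (m + 1)) {s : Set ℕ}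
    {x y : ℕ} (hxy : x ≤ y) (hs : Set.Icc x y ⊆ s) :
    (H.induce s)ᶜ.Reachable ⟨x, hs ⟨le_rfl, hxy⟩⟩ ⟨y, hs ⟨hxy, le_rfl⟩⟩ := by
  induction y, hxy using Nat.le_induction with
  | base => rfl
  | succ y hxy ih =>
    refine (ih ((Set.Icc_subset_Icc_right y.le_succ).trans hs)).trans (SimpleGraph.Adj.reachable ?_)
    simpa [SimpleGraph.compl_adj] using hsucc y

theorem lt_iff_lt_of_reachable_compl_induce_union_Ico {a b c d : ℕ} (hbc : b ≤ c)
    (hcross : ∀ u ∈ Set.Ico a b, ∀ v ∈ Set.Ico c d, H.Adj u v)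
    {x y : ↥(Set.Ico a b ∪ Set.Ico c d)}
    (h : (H.induce (Set.Ico a b ∪ Set.Ico c d))ᶜ.Reachable x y) :
    (x : ℕ) < b ↔ (y : ℕ) < b := by
  rw [SimpleGraph.reachable_iff_reflTransGen] at h
  induction h with
  | refl => rfl
  | @tail y z _ hadj ih =>
    refine ih.trans ?_
    have hnadj : ¬ H.Adj y z := by simpa using ((SimpleGraph.compl_adj _ _ _).1 hadj).2
    rcases y.2 with hy | hy <;> rcases z.2 with hz | hz
    · exact iff_of_true hy.2 hz.2
    · exact absurd (hcross _ hy _ hz) hnadj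
    · exact absurd (hcross _ hz _ hy).symm hnadj
    · exact iff_of_false (by have := hy.1; omega) (by have := hz.1; omega)

theorem reachable_compl_induce_union_Ico_iff (hsucc : ∀ m, ¬ H.Adj m (m + 1)) {a b c d : ℕ}
    (hbc : b ≤ c) (hcross : ∀ u ∈ Set.Ico a b, ∀ v ∈ Set.Ico c d, H.Adj u v)
    (u v : ↥(Set.Ico a b ∪ Set.Ico c d)) :
    (H.induce (Set.Ico a b ∪ Set.Ico c d))ᶜ.Reachable u v ↔
      ((u : ℕ) < b ∧ (v : ℕ) < b) ∨ (c ≤ (u : ℕ) ∧ c ≤ (v : ℕ)) := by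
  have hside (w : ↥(Set.Ico a b ∪ Set.Ico c d)) : (w : ℕ) < b ↔ ¬ c ≤ (w : ℕ) := by
    rcases w.2 with h | h <;> simp only [Set.mem_Ico] at h <;> omega
  have hmono {x y : ↥(Set.Ico a b ∪ Set.Ico c d)} (hxy : (x : ℕ) ≤ y)
      (h : ((x : ℕ) < b ∧ (y : ℕ) < b) ∨ (c ≤ (x : ℕ) ∧ c ≤ (y : ℕ))) :
      (H.induce (Set.Ico a b ∪ Set.Ico c d))ᶜ.Reachable x y := by
    have hsub : Set.Icc (x : ℕ) y ⊆ Set.Ico a b ∪ Set.Ico c d := by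
      intro t ht
      rcases h with ⟨-, hy⟩ | ⟨hx, -⟩
      · rcases x.2 with hx' | hx'
        · exact .inl ⟨hx'.1.trans ht.1, ht.2.trans_lt hy⟩
        · exact absurd hy (by have := hx'.1; omega)
      · rcases y.2 with hy' | hy'
        · exact absurd hy'.2 (by have := ht.1; have := ht.2; omega)
        · exact .inr ⟨hx.trans ht.1, ht.2.trans_lt hy'.2⟩
    exact reachable_compl_induce_of_Icc_subset hsucc hxy hsub
  constructor
  · intro h
    have huv := lt_iff_lt_of_reachable_compl_induce_union_Ico hbc hcross h
    rw [hside u, hside v] at huv ⊢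
    tauto
  · intro h
    rcases le_total (u : ℕ) v with huv | hvu
    · exact hmono huv h
    · exact (hmono hvu (by omega)).symm

end IntervalGraphs

section ChainGraph

variable {E : Set (ℕ × ℕ)} {r n : ℕ}

theorem triRel.add_le_s19 {d k l : ℕ} (hE : ∀ q ∈ E, q.1 + d ≤ q.2) (h : triRel E r n k l) :
    k + d ≤ l := by
  obtain ⟨q, hq, -, h, -⟩ := h
  have := hE q hq
  omega

theorem chainGraph_adj_iff_of_lt (hE : ∀ q ∈ E, q.1 < q.2) {u v : ℕ} (h : u < v) :
    (chainGraph E r n).Adj u v ↔ triRel E r n u v := by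
  have hvu : ¬ triRel E r n v u := fun h' => by have := h'.add_le_s19 (d := 1) hE; omega
  simp [chainGraph, h.ne, hvu]

theorem chainGraph_not_adj_succ (hsp : ∀ q ∈ E, q.1 + 2 ≤ q.2) (m : ℕ) :
    ¬ (chainGraph E r n).Adj m (m + 1) := by
  rintro ⟨-, h | h⟩ <;> have := h.add_le_s19 hsp <;> omega

theorem chainGraph_adj_of_one_sub_one_mem (hE : ∀ q ∈ E, q.1 < q.2) (h1 : (1, r - 1) ∈ E)
    {u v : ℕ} (hu : 1 ≤ u) (huv : u + r ≤ v + 2) (hv : v < n) : (chainGraph E r n).Adj u v := by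
  have hr : 1 < r - 1 := hE _ h1
  rw [chainGraph_adj_iff_of_lt hE (by omega)]
  exact ⟨_, h1, hu, by dsimp only; omega, by dsimp only; omega⟩

theorem chainGraph_adj_last_iff {b B : ℕ} (hE : goodEdges E r) (hb : (b, r) ∈ E)
    (hB : (B, r) ∈ E) (hbmin : ∀ i, (i, r) ∈ E → b ≤ i) (hBmax : ∀ i, (i, r) ∈ E → i ≤ B)
    (hn : r + B ≤ n) {m : ℕ} (hm : m < n) :
    (chainGraph E r n).Adj n m ↔ b ≤ m ∧ m + r ≤ n + B := by
  rw [SimpleGraph.adj_comm, chainGraph_adj_iff_of_lt (fun q hq => (hE q hq).2.1) hm]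
  constructor
  · rintro ⟨⟨i, j⟩, hq, hi, hij, hjn⟩
    obtain rfl : j = r := le_antisymm (hE _ hq).2.2 (by dsimp only at hjn; omega)
    exact ⟨(hbmin i hq).trans hi, by have := hBmax i hq; dsimp only at hij; omega⟩
  · rintro ⟨hbm, hmB⟩
    by_cases hmb : m + r ≤ n + b
    · exact ⟨_, hb, hbm, hmb, le_rfl⟩
    · exact ⟨_, hB, by dsimp only; omega, hmB, le_rfl⟩

theorem Icc_diff_insert_neighborSet_chainGraph {b B : ℕ} (hE : goodEdges E r) (hb : (b, r) ∈ E)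
    (hB : (B, r) ∈ E) (hbmin : ∀ i, (i, r) ∈ E → b ≤ i) (hBmax : ∀ i, (i, r) ∈ E → i ≤ B)
    (hn : r + B ≤ n) :
    Set.Icc 1 n \ insert n ((chainGraph E r n).neighborSet n) =
      Set.Ico 1 b ∪ Set.Ico (n - r + B + 1) n := by
  ext m
  simp only [Set.mem_sdiff, Set.mem_Icc, Set.mem_insert_iff, SimpleGraph.mem_neighborSet,
    Set.mem_union, Set.mem_Ico]
  by_cases hm : m < n
  · rw [chainGraph_adj_last_iff hE hb hB hbmin hBmax hn hm]
    omega
  · have := hbmin _ hB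
    omega

end ChainGraph

/-- Assume `(1, r-1) ∈ E(G_r)` and `j_q = r - 1`, the maximal support index is `r`
(with `b`, `B` the min and max first coordinates of edges ending at `r`), and the
sparsity index is at least 2. Then for `n ≥ 2r+1`, the complement of the induced
subgraph `G_n \ N[n]` has exactly two connected components, namely those on
`V₁ = {1,…,b-1}` and `V₂ = {n-r+B+1,…,n-1}`; consequently the 0-th reduced homology
of the independence complex `IN(G_n \ N[n])` over a field `k` is isomorphic to `k`. -/
theorem two_components_and_redH0 (k : Type) [Field k] (E : Set (ℕ × ℕ)) (r n b B : ℕ)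
    (hE : goodEdges E r) (h1 : (1, r - 1) ∈ E) (hjq : ∀ j, (1, j) ∈ E → j ≤ r - 1)
    (hb : (b, r) ∈ E) (hB : (B, r) ∈ E)
    (hbmin : ∀ i, (i, r) ∈ E → b ≤ i) (hBmax : ∀ i, (i, r) ∈ E → i ≤ B)
    (hsp : ∀ q ∈ E, q.1 + 2 ≤ q.2) (hn : 2 * r + 1 ≤ n) :
    ∀ S : Set ℕ, S = Set.Icc 1 n \ insert n ((chainGraph E r n).neighborSet n) →
      ((∃ u : S, (u : ℕ) < b) ∧ (∃ u : S, n - r + B + 1 ≤ (u : ℕ)) ∧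
      (∀ u v : S, (((chainGraph E r n).induce S)ᶜ).Reachable u v ↔
        (((u : ℕ) < b ∧ (v : ℕ) < b) ∨
          (n - r + B + 1 ≤ (u : ℕ) ∧ n - r + B + 1 ≤ (v : ℕ)))) ∧
      Nonempty (redH0 k S (indepComplex ((chainGraph E r n).induce S)) ≃ₗ[k] k)) := by
  intro S hS
  have hbr := hsp _ hb
  have hBr := hsp _ hB
  have hbB := hbmin _ hB
  -- `b = 1` would give `(1, r) ∈ E`, beyond `j_q = r - 1`
  have hb2 : 2 ≤ b := by
    by_contra! h
    obtain rfl : b = 1 := by have := (hE _ hb).1; omega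
    have := hjq r hb
    omega
  rw [Icc_diff_insert_neighborSet_chainGraph hE hb hB hbmin hBmax (by omega)] at hS
  subst hS
  have hreach := reachable_compl_induce_union_Ico_iff (d := n) (chainGraph_not_adj_succ hsp)
    (by omega : b ≤ n - r + B + 1) fun u hu v hv =>
      chainGraph_adj_of_one_sub_one_mem (fun q hq => (hE q hq).2.1) h1 hu.1
        (by have := hu.2; have := hv.1; omega) hv.2
  have h1mem : 1 ∈ Set.Ico 1 b ∪ Set.Ico (n - r + B + 1) n := .inl ⟨le_rfl, by omega⟩
  have hnmem : n - 1 ∈ Set.Ico 1 b ∪ Set.Ico (n - r + B + 1) n := .inr ⟨by omega, by omega⟩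
  refine ⟨⟨⟨1, h1mem⟩, by dsimp only; omega⟩, ⟨⟨n - 1, hnmem⟩, by dsimp only; omega⟩, hreach,
    nonempty_redH0_indepComplex_equiv _ k ⟨1, h1mem⟩ ⟨n - 1, hnmem⟩ (fun v => ?_) ?_⟩
  · rw [hreach, hreach]
    rcases v.2 with hv | hv <;> have := hv.1 <;> have := hv.2 <;> dsimp only <;> omega
  · rw [hreach]
    dsimp only
    omega
end
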